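/- arXiv:2312.06237 — 4 statements merged into one kernel-verified Lean document; each statement's English description precedes it below -/
import Mathlib

section
/- Let 𝔠 be a short multicategory admitting all binary map classifiers θ_{a,b} : a,b → ab and a nullary map classifier u ∈ 𝔠_0(;i), all of them left universal. Then: (1) the ternary multimap θ_{ab,c}∘_1θ_{a,b} : a,b,c → (ab)c is a 3-ary map classifier, i.e. −∘_1(θ_{ab,c}∘_1θ_{a,b}) : 𝔠_1((ab)c;d) → 𝔠_3(a,b,c;d) is bijective for all d; (2) the 4-ary multimap θ_{(ab)c,d}∘_1θ_{ab,c}∘_1θ_{a,b} : a,b,c,d → ((ab)c)d is a 4-ary map classifier, i.e. substitution along it gives a bijection 𝔠_1(((ab)c)d;e) → 𝔠_4(a,b,c,d;e) for all e; and (3) the unary multimap θ_{i,a}∘_1u : a → ia is a unary map classifier, i.e. −∘(θ_{i,a}∘_1u) : 𝔠_1(ia;b) → 𝔠_1(a;b) is bijective for all b. -/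
open CategoryTheory

universe v u

/-- A *short multicategory* structure on a category `C` (Bourke–Lobbia).
The unary multimaps are exactly the morphisms of `C`; the functoriality of the
families of `n`-ary multimaps is encoded by the actions `map0, map2, map3, map4`
(pre- and post-composition with unary maps), and the substitution operations
`∘ᵢ` are given for the arities `(n,m) ∈ {(2,2),(3,2),(2,3),(2,0),(3,0)}`,
natural in each variable except the substituted one and dinatural in that one,
subject to the associativity and interchange equations. -/
structure ShortMultiStruct (C : Type u) [Category.{v} C] where
  /-- nullary multimaps -/
  M0 : C → Type v
  /-- binary multimaps -/
  M2 : C → C → C → Type v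
  /-- ternary multimaps -/
  M3 : C → C → C → C → Type v
  /-- 4-ary multimaps -/
  M4 : C → C → C → C → C → Type v
  /-- functorial action on nullary multimaps -/
  map0 : ∀ {b b' : C}, (b ⟶ b') → M0 b → M0 b'
  /-- functorial action on binary multimaps -/
  map2 : ∀ {a1' a1 a2' a2 b b' : C},
    (a1' ⟶ a1) → (a2' ⟶ a2) → (b ⟶ b') → M2 a1 a2 b → M2 a1' a2' b'
  map3 : ∀ {a1' a1 a2' a2 a3' a3 b b' : C},
    (a1' ⟶ a1) → (a2' ⟶ a2) → (a3' ⟶ a3) → (b ⟶ b') → M3 a1 a2 a3 b → M3 a1' a2' a3' b'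
  map4 : ∀ {a1' a1 a2' a2 a3' a3 a4' a4 b b' : C},
    (a1' ⟶ a1) → (a2' ⟶ a2) → (a3' ⟶ a3) → (a4' ⟶ a4) → (b ⟶ b') →
      M4 a1 a2 a3 a4 b → M4 a1' a2' a3' a4' b'
  map0_id : ∀ {b : C} (x : M0 b), map0 (𝟙 b) x = x
  map0_comp : ∀ {b b' b'' : C} (q : b ⟶ b') (q' : b' ⟶ b'') (x : M0 b),
    map0 q' (map0 q x) = map0 (q ≫ q') x
  map2_id : ∀ {a1 a2 b : C} (x : M2 a1 a2 b), map2 (𝟙 a1) (𝟙 a2) (𝟙 b) x = x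
  map2_comp : ∀ {a1'' a1' a1 a2'' a2' a2 b b' b'' : C}
    (p1' : a1'' ⟶ a1') (p1 : a1' ⟶ a1) (p2' : a2'' ⟶ a2') (p2 : a2' ⟶ a2)
    (q : b ⟶ b') (q' : b' ⟶ b'') (x : M2 a1 a2 b),
    map2 p1' p2' q' (map2 p1 p2 q x) = map2 (p1' ≫ p1) (p2' ≫ p2) (q ≫ q') x
  map3_id : ∀ {a1 a2 a3 b : C} (x : M3 a1 a2 a3 b),
    map3 (𝟙 a1) (𝟙 a2) (𝟙 a3) (𝟙 b) x = x
  map3_comp : ∀ {a1'' a1' a1 a2'' a2' a2 a3'' a3' a3 b b' b'' : C}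
    (p1' : a1'' ⟶ a1') (p1 : a1' ⟶ a1) (p2' : a2'' ⟶ a2') (p2 : a2' ⟶ a2)
    (p3' : a3'' ⟶ a3') (p3 : a3' ⟶ a3) (q : b ⟶ b') (q' : b' ⟶ b'') (x : M3 a1 a2 a3 b),
    map3 p1' p2' p3' q' (map3 p1 p2 p3 q x)
      = map3 (p1' ≫ p1) (p2' ≫ p2) (p3' ≫ p3) (q ≫ q') x
  map4_id : ∀ {a1 a2 a3 a4 b : C} (x : M4 a1 a2 a3 a4 b),
    map4 (𝟙 a1) (𝟙 a2) (𝟙 a3) (𝟙 a4) (𝟙 b) x = x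
  map4_comp : ∀ {a1'' a1' a1 a2'' a2' a2 a3'' a3' a3 a4'' a4' a4 b b' b'' : C}
    (p1' : a1'' ⟶ a1') (p1 : a1' ⟶ a1) (p2' : a2'' ⟶ a2') (p2 : a2' ⟶ a2)
    (p3' : a3'' ⟶ a3') (p3 : a3' ⟶ a3) (p4' : a4'' ⟶ a4') (p4 : a4' ⟶ a4)
    (q : b ⟶ b') (q' : b' ⟶ b'') (x : M4 a1 a2 a3 a4 b),
    map4 p1' p2' p3' p4' q' (map4 p1 p2 p3 p4 q x)
      = map4 (p1' ≫ p1) (p2' ≫ p2) (p3' ≫ p3) (p4' ≫ p4) (q ≫ q') x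
  /-- substitution of a binary multimap into the 1st variable of a binary multimap -/
  s22_1 : ∀ {b1 b2 c a1 a2 : C}, M2 b1 b2 c → M2 a1 a2 b1 → M3 a1 a2 b2 c
  /-- substitution of a binary multimap into the 2nd variable of a binary multimap -/
  s22_2 : ∀ {b1 b2 c a1 a2 : C}, M2 b1 b2 c → M2 a1 a2 b2 → M3 b1 a1 a2 c
  /-- substitution of a binary multimap into the 1st variable of a ternary multimap -/
  s32_1 : ∀ {b1 b2 b3 c a1 a2 : C}, M3 b1 b2 b3 c → M2 a1 a2 b1 → M4 a1 a2 b2 b3 c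
  s32_2 : ∀ {b1 b2 b3 c a1 a2 : C}, M3 b1 b2 b3 c → M2 a1 a2 b2 → M4 b1 a1 a2 b3 c
  s32_3 : ∀ {b1 b2 b3 c a1 a2 : C}, M3 b1 b2 b3 c → M2 a1 a2 b3 → M4 b1 b2 a1 a2 c
  /-- substitution of a ternary multimap into the 1st variable of a binary multimap -/
  s23_1 : ∀ {b1 b2 c a1 a2 a3 : C}, M2 b1 b2 c → M3 a1 a2 a3 b1 → M4 a1 a2 a3 b2 c
  s23_2 : ∀ {b1 b2 c a1 a2 a3 : C}, M2 b1 b2 c → M3 a1 a2 a3 b2 → M4 b1 a1 a2 a3 c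
  /-- substitution of a nullary multimap into the 1st variable of a binary multimap -/
  s20_1 : ∀ {b1 b2 c : C}, M2 b1 b2 c → M0 b1 → (b2 ⟶ c)
  s20_2 : ∀ {b1 b2 c : C}, M2 b1 b2 c → M0 b2 → (b1 ⟶ c)
  /-- substitution of a nullary multimap into the 1st variable of a ternary multimap -/
  s30_1 : ∀ {b1 b2 b3 c : C}, M3 b1 b2 b3 c → M0 b1 → M2 b2 b3 c
  s30_2 : ∀ {b1 b2 b3 c : C}, M3 b1 b2 b3 c → M0 b2 → M2 b1 b3 c
  s30_3 : ∀ {b1 b2 b3 c : C}, M3 b1 b2 b3 c → M0 b3 → M2 b1 b2 c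
  -- naturality and dinaturality of the substitutions
  s22_1_nat : ∀ {a1' a1 a2' a2 b1 b2' b2 c c' : C} (p1 : a1' ⟶ a1) (p2 : a2' ⟶ a2)
    (q : b2' ⟶ b2) (r : c ⟶ c') (g : M2 b1 b2 c) (f : M2 a1 a2 b1),
    map3 p1 p2 q r (s22_1 g f) = s22_1 (map2 (𝟙 b1) q r g) (map2 p1 p2 (𝟙 b1) f)
  s22_1_dinat : ∀ {a1 a2 b1 b1' b2 c : C} (h : b1 ⟶ b1') (g : M2 b1' b2 c) (f : M2 a1 a2 b1),
    s22_1 (map2 h (𝟙 b2) (𝟙 c) g) f = s22_1 g (map2 (𝟙 a1) (𝟙 a2) h f)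
  s22_2_nat : ∀ {a1' a1 a2' a2 b1' b1 b2 c c' : C} (p1 : a1' ⟶ a1) (p2 : a2' ⟶ a2)
    (q : b1' ⟶ b1) (r : c ⟶ c') (g : M2 b1 b2 c) (f : M2 a1 a2 b2),
    map3 q p1 p2 r (s22_2 g f) = s22_2 (map2 q (𝟙 b2) r g) (map2 p1 p2 (𝟙 b2) f)
  s22_2_dinat : ∀ {a1 a2 b1 b2 b2' c : C} (h : b2 ⟶ b2') (g : M2 b1 b2' c) (f : M2 a1 a2 b2),
    s22_2 (map2 (𝟙 b1) h (𝟙 c) g) f = s22_2 g (map2 (𝟙 a1) (𝟙 a2) h f)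
  s32_1_nat : ∀ {a1' a1 a2' a2 b1 b2' b2 b3' b3 c c' : C} (p1 : a1' ⟶ a1) (p2 : a2' ⟶ a2)
    (q2 : b2' ⟶ b2) (q3 : b3' ⟶ b3) (r : c ⟶ c') (g : M3 b1 b2 b3 c) (f : M2 a1 a2 b1),
    map4 p1 p2 q2 q3 r (s32_1 g f)
      = s32_1 (map3 (𝟙 b1) q2 q3 r g) (map2 p1 p2 (𝟙 b1) f)
  s32_1_dinat : ∀ {a1 a2 b1 b1' b2 b3 c : C} (h : b1 ⟶ b1') (g : M3 b1' b2 b3 c)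
    (f : M2 a1 a2 b1),
    s32_1 (map3 h (𝟙 b2) (𝟙 b3) (𝟙 c) g) f = s32_1 g (map2 (𝟙 a1) (𝟙 a2) h f)
  s32_2_nat : ∀ {a1' a1 a2' a2 b1' b1 b2 b3' b3 c c' : C} (p1 : a1' ⟶ a1) (p2 : a2' ⟶ a2)
    (q1 : b1' ⟶ b1) (q3 : b3' ⟶ b3) (r : c ⟶ c') (g : M3 b1 b2 b3 c) (f : M2 a1 a2 b2),
    map4 q1 p1 p2 q3 r (s32_2 g f)
      = s32_2 (map3 q1 (𝟙 b2) q3 r g) (map2 p1 p2 (𝟙 b2) f)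
  s32_2_dinat : ∀ {a1 a2 b1 b2 b2' b3 c : C} (h : b2 ⟶ b2') (g : M3 b1 b2' b3 c)
    (f : M2 a1 a2 b2),
    s32_2 (map3 (𝟙 b1) h (𝟙 b3) (𝟙 c) g) f = s32_2 g (map2 (𝟙 a1) (𝟙 a2) h f)
  s32_3_nat : ∀ {a1' a1 a2' a2 b1' b1 b2' b2 b3 c c' : C} (p1 : a1' ⟶ a1) (p2 : a2' ⟶ a2)
    (q1 : b1' ⟶ b1) (q2 : b2' ⟶ b2) (r : c ⟶ c') (g : M3 b1 b2 b3 c) (f : M2 a1 a2 b3),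
    map4 q1 q2 p1 p2 r (s32_3 g f)
      = s32_3 (map3 q1 q2 (𝟙 b3) r g) (map2 p1 p2 (𝟙 b3) f)
  s32_3_dinat : ∀ {a1 a2 b1 b2 b3 b3' c : C} (h : b3 ⟶ b3') (g : M3 b1 b2 b3' c)
    (f : M2 a1 a2 b3),
    s32_3 (map3 (𝟙 b1) (𝟙 b2) h (𝟙 c) g) f = s32_3 g (map2 (𝟙 a1) (𝟙 a2) h f)
  s23_1_nat : ∀ {a1' a1 a2' a2 a3' a3 b1 b2' b2 c c' : C}
    (p1 : a1' ⟶ a1) (p2 : a2' ⟶ a2) (p3 : a3' ⟶ a3) (q : b2' ⟶ b2) (r : c ⟶ c')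
    (g : M2 b1 b2 c) (f : M3 a1 a2 a3 b1),
    map4 p1 p2 p3 q r (s23_1 g f)
      = s23_1 (map2 (𝟙 b1) q r g) (map3 p1 p2 p3 (𝟙 b1) f)
  s23_1_dinat : ∀ {a1 a2 a3 b1 b1' b2 c : C} (h : b1 ⟶ b1') (g : M2 b1' b2 c)
    (f : M3 a1 a2 a3 b1),
    s23_1 (map2 h (𝟙 b2) (𝟙 c) g) f = s23_1 g (map3 (𝟙 a1) (𝟙 a2) (𝟙 a3) h f)
  s23_2_nat : ∀ {a1' a1 a2' a2 a3' a3 b1' b1 b2 c c' : C}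
    (p1 : a1' ⟶ a1) (p2 : a2' ⟶ a2) (p3 : a3' ⟶ a3) (q : b1' ⟶ b1) (r : c ⟶ c')
    (g : M2 b1 b2 c) (f : M3 a1 a2 a3 b2),
    map4 q p1 p2 p3 r (s23_2 g f)
      = s23_2 (map2 q (𝟙 b2) r g) (map3 p1 p2 p3 (𝟙 b2) f)
  s23_2_dinat : ∀ {a1 a2 a3 b1 b2 b2' c : C} (h : b2 ⟶ b2') (g : M2 b1 b2' c)
    (f : M3 a1 a2 a3 b2),
    s23_2 (map2 (𝟙 b1) h (𝟙 c) g) f = s23_2 g (map3 (𝟙 a1) (𝟙 a2) (𝟙 a3) h f)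
  s20_1_nat : ∀ {b1 b2' b2 c c' : C} (q : b2' ⟶ b2) (r : c ⟶ c')
    (g : M2 b1 b2 c) (u : M0 b1),
    q ≫ s20_1 g u ≫ r = s20_1 (map2 (𝟙 b1) q r g) u
  s20_1_dinat : ∀ {b1 b1' b2 c : C} (h : b1 ⟶ b1') (g : M2 b1' b2 c) (u : M0 b1),
    s20_1 (map2 h (𝟙 b2) (𝟙 c) g) u = s20_1 g (map0 h u)
  s20_2_nat : ∀ {b1' b1 b2 c c' : C} (q : b1' ⟶ b1) (r : c ⟶ c')
    (g : M2 b1 b2 c) (u : M0 b2),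
    q ≫ s20_2 g u ≫ r = s20_2 (map2 q (𝟙 b2) r g) u
  s20_2_dinat : ∀ {b1 b2 b2' c : C} (h : b2 ⟶ b2') (g : M2 b1 b2' c) (u : M0 b2),
    s20_2 (map2 (𝟙 b1) h (𝟙 c) g) u = s20_2 g (map0 h u)
  s30_1_nat : ∀ {b1 b2' b2 b3' b3 c c' : C} (q2 : b2' ⟶ b2) (q3 : b3' ⟶ b3) (r : c ⟶ c')
    (g : M3 b1 b2 b3 c) (u : M0 b1),
    map2 q2 q3 r (s30_1 g u) = s30_1 (map3 (𝟙 b1) q2 q3 r g) u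
  s30_1_dinat : ∀ {b1 b1' b2 b3 c : C} (h : b1 ⟶ b1') (g : M3 b1' b2 b3 c) (u : M0 b1),
    s30_1 (map3 h (𝟙 b2) (𝟙 b3) (𝟙 c) g) u = s30_1 g (map0 h u)
  s30_2_nat : ∀ {b1' b1 b2 b3' b3 c c' : C} (q1 : b1' ⟶ b1) (q3 : b3' ⟶ b3) (r : c ⟶ c')
    (g : M3 b1 b2 b3 c) (u : M0 b2),
    map2 q1 q3 r (s30_2 g u) = s30_2 (map3 q1 (𝟙 b2) q3 r g) u
  s30_2_dinat : ∀ {b1 b2 b2' b3 c : C} (h : b2 ⟶ b2') (g : M3 b1 b2' b3 c) (u : M0 b2),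
    s30_2 (map3 (𝟙 b1) h (𝟙 b3) (𝟙 c) g) u = s30_2 g (map0 h u)
  s30_3_nat : ∀ {b1' b1 b2' b2 b3 c c' : C} (q1 : b1' ⟶ b1) (q2 : b2' ⟶ b2) (r : c ⟶ c')
    (g : M3 b1 b2 b3 c) (u : M0 b3),
    map2 q1 q2 r (s30_3 g u) = s30_3 (map3 q1 q2 (𝟙 b3) r g) u
  s30_3_dinat : ∀ {b1 b2 b3 b3' c : C} (h : b3 ⟶ b3') (g : M3 b1 b2 b3' c) (u : M0 b3),
    s30_3 (map3 (𝟙 b1) (𝟙 b2) h (𝟙 c) g) u = s30_3 g (map0 h u)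
  -- associativity equations `f ∘ᵢ (g ∘ⱼ h) = (f ∘ᵢ g) ∘_{j+i-1} h`, `f, g` binary:
  -- (a) `h` binary
  assoc_a_11 : ∀ {x1 x2 c b1 b2 a1 a2 : C} (f : M2 x1 x2 c) (g : M2 b1 b2 x1)
    (h : M2 a1 a2 b1), s23_1 f (s22_1 g h) = s32_1 (s22_1 f g) h
  assoc_a_12 : ∀ {x1 x2 c b1 b2 a1 a2 : C} (f : M2 x1 x2 c) (g : M2 b1 b2 x1)
    (h : M2 a1 a2 b2), s23_1 f (s22_2 g h) = s32_2 (s22_1 f g) h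
  assoc_a_21 : ∀ {x1 x2 c b1 b2 a1 a2 : C} (f : M2 x1 x2 c) (g : M2 b1 b2 x2)
    (h : M2 a1 a2 b1), s23_2 f (s22_1 g h) = s32_2 (s22_2 f g) h
  assoc_a_22 : ∀ {x1 x2 c b1 b2 a1 a2 : C} (f : M2 x1 x2 c) (g : M2 b1 b2 x2)
    (h : M2 a1 a2 b2), s23_2 f (s22_2 g h) = s32_3 (s22_2 f g) h
  -- (b) `h` nullary
  assoc_b_11 : ∀ {x1 x2 c b1 b2 : C} (f : M2 x1 x2 c) (g : M2 b1 b2 x1) (u : M0 b1),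
    map2 (s20_1 g u) (𝟙 x2) (𝟙 c) f = s30_1 (s22_1 f g) u
  assoc_b_12 : ∀ {x1 x2 c b1 b2 : C} (f : M2 x1 x2 c) (g : M2 b1 b2 x1) (u : M0 b2),
    map2 (s20_2 g u) (𝟙 x2) (𝟙 c) f = s30_2 (s22_1 f g) u
  assoc_b_21 : ∀ {x1 x2 c b1 b2 : C} (f : M2 x1 x2 c) (g : M2 b1 b2 x2) (u : M0 b1),
    map2 (𝟙 x1) (s20_1 g u) (𝟙 c) f = s30_2 (s22_2 f g) u
  assoc_b_22 : ∀ {x1 x2 c b1 b2 : C} (f : M2 x1 x2 c) (g : M2 b1 b2 x2) (u : M0 b2),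
    map2 (𝟙 x1) (s20_2 g u) (𝟙 c) f = s30_3 (s22_2 f g) u
  -- interchange equations `(f ∘₁ g) ∘_{n+1} h = (f ∘₂ h) ∘₁ g`, `f` binary:
  inter_a : ∀ {x1 x2 c a1 a2 b1 b2 : C} (f : M2 x1 x2 c) (g : M2 a1 a2 x1)
    (h : M2 b1 b2 x2), s32_3 (s22_1 f g) h = s32_1 (s22_2 f h) g
  inter_b : ∀ {x1 x2 c a1 a2 : C} (f : M2 x1 x2 c) (g : M2 a1 a2 x1) (u : M0 x2),
    s30_3 (s22_1 f g) u = map2 (𝟙 a1) (𝟙 a2) (s20_2 f u) g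
  inter_c : ∀ {x1 x2 c b1 b2 : C} (f : M2 x1 x2 c) (h : M2 b1 b2 x2) (u : M0 x1),
    map2 (𝟙 b1) (𝟙 b2) (s20_1 f u) h = s30_1 (s22_2 f h) u
  inter_d : ∀ {x1 x2 c : C} (f : M2 x1 x2 c) (u : M0 x1) (v : M0 x2),
    map0 (s20_1 f u) v = map0 (s20_2 f v) u

namespace ShortMultiStruct

variable {C : Type u} [Category.{v} C] (S : ShortMultiStruct C)

/-- `θ ∈ 𝔠₂(a,b; t)` is a binary map classifier if substitution of `θ` into unary
multimaps is bijective. -/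
def IsBinClassifier {a b t : C} (θ : S.M2 a b t) : Prop :=
  ∀ c : C, Function.Bijective (fun p : t ⟶ c => S.map2 (𝟙 a) (𝟙 b) p θ)

/-- A binary map classifier is *left universal* if substitution into the first
variable of binary and ternary multimaps is also bijective. -/
def IsLeftUniversalBin {a b t : C} (θ : S.M2 a b t) : Prop :=
  S.IsBinClassifier θ ∧
  (∀ x d : C, Function.Bijective (fun g : S.M2 t x d => S.s22_1 g θ)) ∧
  (∀ x y d : C, Function.Bijective (fun g : S.M3 t x y d => S.s32_1 g θ))

/-- `u ∈ 𝔠₀(; i)` is a nullary map classifier if substitution of `u` into unary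
multimaps is bijective. -/
def IsNulClassifier {i : C} (u : S.M0 i) : Prop :=
  ∀ b : C, Function.Bijective (fun p : i ⟶ b => S.map0 p u)

/-- A nullary map classifier is *left universal* if substitution into the first
variable of binary and ternary multimaps is also bijective. -/
def IsLeftUniversalNul {i : C} (u : S.M0 i) : Prop :=
  S.IsNulClassifier u ∧
  (∀ x d : C, Function.Bijective (fun g : S.M2 i x d => S.s20_1 g u)) ∧
  (∀ x y d : C, Function.Bijective (fun g : S.M3 i x y d => S.s30_1 g u))

/-- A short multicategory is *left representable* if it admits left universal
nullary and binary map classifiers. -/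
def LeftRepresentable : Prop :=
  (∀ a b : C, ∃ (t : C) (θ : S.M2 a b t), S.IsLeftUniversalBin θ) ∧
  (∃ (i : C) (u : S.M0 i), S.IsLeftUniversalNul u)

/-- A binary map classifier is part of a *representable* structure when substitution
with it in every position of `n`-ary multimaps, `1 ≤ n ≤ 3`, is bijective. -/
def IsRepBin {a b t : C} (θ : S.M2 a b t) : Prop :=
  S.IsBinClassifier θ ∧
  (∀ x d : C, Function.Bijective (fun g : S.M2 t x d => S.s22_1 g θ)) ∧
  (∀ x d : C, Function.Bijective (fun g : S.M2 x t d => S.s22_2 g θ)) ∧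
  (∀ x y d : C, Function.Bijective (fun g : S.M3 t x y d => S.s32_1 g θ)) ∧
  (∀ x y d : C, Function.Bijective (fun g : S.M3 x t y d => S.s32_2 g θ)) ∧
  (∀ x y d : C, Function.Bijective (fun g : S.M3 x y t d => S.s32_3 g θ))

/-- A nullary map classifier is part of a *representable* structure when substitution
with it in every position of `n`-ary multimaps, `1 ≤ n ≤ 3`, is bijective. -/
def IsRepNul {i : C} (u : S.M0 i) : Prop :=
  S.IsNulClassifier u ∧
  (∀ x d : C, Function.Bijective (fun g : S.M2 i x d => S.s20_1 g u)) ∧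
  (∀ x d : C, Function.Bijective (fun g : S.M2 x i d => S.s20_2 g u)) ∧
  (∀ x y d : C, Function.Bijective (fun g : S.M3 i x y d => S.s30_1 g u)) ∧
  (∀ x y d : C, Function.Bijective (fun g : S.M3 x i y d => S.s30_2 g u)) ∧
  (∀ x y d : C, Function.Bijective (fun g : S.M3 x y i d => S.s30_3 g u))

/-- A short multicategory is *representable* if it admits nullary and binary map
classifiers for which substitution in every position is bijective. -/
def Representable : Prop :=
  (∀ a b : C, ∃ (t : C) (θ : S.M2 a b t), S.IsRepBin θ) ∧
  (∃ (i : C) (u : S.M0 i), S.IsRepNul u)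

/-- `e ∈ 𝔠₂([b,c], b; c)` exhibits `h = [b,c]` as an internal hom when substitution
into the first variable of `e` induces bijections `𝔠ₙ(x̄;[b,c]) ≅ 𝔠ₙ₊₁(x̄,b;c)`
for `n = 0,1,2,3`. -/
def IsHomObj {b c h : C} (e : S.M2 h b c) : Prop :=
  Function.Bijective (fun v : S.M0 h => S.s20_1 e v) ∧
  (∀ x : C, Function.Bijective (fun p : x ⟶ h => S.map2 p (𝟙 b) (𝟙 c) e)) ∧
  (∀ x y : C, Function.Bijective (fun g : S.M2 x y h => S.s22_1 e g)) ∧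
  (∀ x y z : C, Function.Bijective (fun g : S.M3 x y z h => S.s23_1 e g))

/-- A short multicategory is *closed* when every pair of objects admits an
internal hom. -/
def Closed : Prop := ∀ b c : C, ∃ (h : C) (e : S.M2 h b c), S.IsHomObj e

end ShortMultiStruct

open ShortMultiStruct in
/-- **Statement 11** (Proposition 2.2 of Bourke–Lobbia, "A Skew Approach to
Representability"). Let `𝔠` be a short multicategory admitting all binary map
classifiers `θ_{a,b} : a,b → ab` and a nullary map classifier `u ∈ 𝔠₀(;i)`, all
of them left universal.  Then
(1) `θ_{ab,c} ∘₁ θ_{a,b} : a,b,c → (ab)c` is a ternary map classifier;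
(2) `θ_{(ab)c,d} ∘₁ θ_{ab,c} ∘₁ θ_{a,b} : a,b,c,d → ((ab)c)d` is a 4-ary map
classifier; and
(3) `θ_{i,a} ∘₁ u : a → ia` is a unary map classifier. -/
theorem stmt_11 {C : Type u} [Category.{v} C] (S : ShortMultiStruct C)
    (T : C → C → C) (θ : ∀ a b : C, S.M2 a b (T a b))
    (hθ : ∀ a b : C, S.IsLeftUniversalBin (θ a b))
    (i : C) (u : S.M0 i) (hu : S.IsLeftUniversalNul u) :
    -- (1) ternary map classifiers
    (∀ a b c d : C,
      Function.Bijective (fun p : T (T a b) c ⟶ d =>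
        S.map3 (𝟙 a) (𝟙 b) (𝟙 c) p (S.s22_1 (θ (T a b) c) (θ a b)))) ∧
    -- (2) 4-ary map classifiers
    (∀ a b c d e : C,
      Function.Bijective (fun p : T (T (T a b) c) d ⟶ e =>
        S.map4 (𝟙 a) (𝟙 b) (𝟙 c) (𝟙 d) p
          (S.s32_1 (S.s22_1 (θ (T (T a b) c) d) (θ (T a b) c)) (θ a b)))) ∧
    -- (3) unary map classifiers
    (∀ a b : C,
      Function.Bijective (fun p : T i a ⟶ b => S.s20_1 (θ i a) u ≫ p)) := by
  refine ⟨fun a b c d => ?_, fun a b c d e => ?_, fun a b => ?_⟩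
  · have h1 : Function.Bijective
        (fun p : T (T a b) c ⟶ d => S.map2 (𝟙 (T a b)) (𝟙 c) p (θ (T a b) c)) :=
      (hθ (T a b) c).1 d
    have h2 := (hθ a b).2.1 c d
    have := h2.comp h1
    convert this using 1
    funext p
    show S.map3 (𝟙 a) (𝟙 b) (𝟙 c) p (S.s22_1 (θ (T a b) c) (θ a b))
      = S.s22_1 (S.map2 (𝟙 (T a b)) (𝟙 c) p (θ (T a b) c)) (θ a b)
    rw [S.s22_1_nat, S.map2_id]
  · have h1 : Function.Bijective
        (fun p : T (T (T a b) c) d ⟶ e =>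
          S.map2 (𝟙 (T (T a b) c)) (𝟙 d) p (θ (T (T a b) c) d)) :=
      (hθ (T (T a b) c) d).1 e
    have h2 := (hθ (T a b) c).2.1 d e
    have h3 := (hθ a b).2.2 c d e
    have := (h3.comp h2).comp h1
    convert this using 1
    funext p
    show S.map4 (𝟙 a) (𝟙 b) (𝟙 c) (𝟙 d) p
        (S.s32_1 (S.s22_1 (θ (T (T a b) c) d) (θ (T a b) c)) (θ a b))
      = S.s32_1 (S.s22_1 (S.map2 (𝟙 (T (T a b) c)) (𝟙 d) p (θ (T (T a b) c) d))
          (θ (T a b) c)) (θ a b)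
    rw [S.s32_1_nat, S.map2_id, S.s22_1_nat, S.map2_id]
  · have h1 : Function.Bijective
        (fun p : T i a ⟶ b => S.map2 (𝟙 i) (𝟙 a) p (θ i a)) := (hθ i a).1 b
    have h2 := hu.2.1 a b
    have := h2.comp h1
    convert this using 1
    funext p
    show S.s20_1 (θ i a) u ≫ p = S.s20_1 (S.map2 (𝟙 i) (𝟙 a) p (θ i a)) u
    rw [← S.s20_1_nat, Category.id_comp]
end

section
/- A closed short multicategory 𝔠 is left representable if and only if it has a nullary map classifier and, for each object b, the functor [b,−] : C → C (induced by the closed structure) has a left adjoint. -/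
open CategoryTheory

universe v u

namespace ShortMultiStruct

variable {C : Type u} [Category.{v} C] (S : ShortMultiStruct C)

/-- The internal-hom functor `[b,-] : C ⥤ C` induced by a closed structure
`(H, e)` on a short multicategory: `[b,g]` is the unique unary map with
`e_{b,c'} ∘₁ [b,g] = g ∘ e_{b,c}`. -/
noncomputable def homFunctor (H : C → C → C) (e : ∀ b c : C, S.M2 (H b c) b c)
    (he : ∀ b c : C, S.IsHomObj (e b c)) (b : C) : C ⥤ C where
  obj c := H b c
  map {c c'} g := (Equiv.ofBijective _ ((he b c').2.1 (H b c))).symm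
      (S.map2 (𝟙 (H b c)) (𝟙 b) g (e b c))
  map_id c := by
    rw [Equiv.symm_apply_eq, Equiv.ofBijective_apply]
  map_comp {c c' c''} g g' := by
    rw [Equiv.symm_apply_eq, Equiv.ofBijective_apply]
    have hp : S.map2 ((Equiv.ofBijective _ ((he b c').2.1 (H b c))).symm
        (S.map2 (𝟙 (H b c)) (𝟙 b) g (e b c))) (𝟙 b) (𝟙 c') (e b c')
        = S.map2 (𝟙 (H b c)) (𝟙 b) g (e b c) := by
      conv_rhs => rw [← Equiv.apply_symm_apply
        (Equiv.ofBijective _ ((he b c').2.1 (H b c)))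
        (S.map2 (𝟙 (H b c)) (𝟙 b) g (e b c))]
      rfl
    have hp' : S.map2 ((Equiv.ofBijective _ ((he b c'').2.1 (H b c'))).symm
        (S.map2 (𝟙 (H b c')) (𝟙 b) g' (e b c'))) (𝟙 b) (𝟙 c'') (e b c'')
        = S.map2 (𝟙 (H b c')) (𝟙 b) g' (e b c') := by
      conv_rhs => rw [← Equiv.apply_symm_apply
        (Equiv.ofBijective _ ((he b c'').2.1 (H b c')))
        (S.map2 (𝟙 (H b c')) (𝟙 b) g' (e b c'))]
      rfl
    calc S.map2 (𝟙 (H b c)) (𝟙 b) (g ≫ g') (e b c)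
        = S.map2 (𝟙 (H b c)) (𝟙 b) g' (S.map2 (𝟙 (H b c)) (𝟙 b) g (e b c)) := by
          rw [S.map2_comp]; simp
      _ = S.map2 (𝟙 (H b c)) (𝟙 b) g'
            (S.map2 ((Equiv.ofBijective _ ((he b c').2.1 (H b c))).symm
              (S.map2 (𝟙 (H b c)) (𝟙 b) g (e b c))) (𝟙 b) (𝟙 c') (e b c')) := by
          rw [hp]
      _ = S.map2 (((Equiv.ofBijective _ ((he b c').2.1 (H b c))).symm
              (S.map2 (𝟙 (H b c)) (𝟙 b) g (e b c)))) (𝟙 b) (𝟙 c'')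
            (S.map2 (𝟙 (H b c')) (𝟙 b) g' (e b c')) := by
          rw [S.map2_comp, S.map2_comp]; simp
      _ = S.map2 (((Equiv.ofBijective _ ((he b c').2.1 (H b c))).symm
              (S.map2 (𝟙 (H b c)) (𝟙 b) g (e b c)))) (𝟙 b) (𝟙 c'')
            (S.map2 ((Equiv.ofBijective _ ((he b c'').2.1 (H b c'))).symm
              (S.map2 (𝟙 (H b c')) (𝟙 b) g' (e b c'))) (𝟙 b) (𝟙 c'') (e b c'')) := by
          rw [hp']
      _ = S.map2 ((Equiv.ofBijective _ ((he b c').2.1 (H b c))).symm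
              (S.map2 (𝟙 (H b c)) (𝟙 b) g (e b c)) ≫
            (Equiv.ofBijective _ ((he b c'').2.1 (H b c'))).symm
              (S.map2 (𝟙 (H b c')) (𝟙 b) g' (e b c'))) (𝟙 b) (𝟙 c'') (e b c'') := by
          rw [S.map2_comp]; simp

end ShortMultiStruct

/-!
In a closed short multicategory, substituting a classifier into the first variable of an
`(n+1)`-ary multimap is conjugate, along the currying bijections
`𝔠ₙ₊₁(x̄, b; c) ≅ 𝔠ₙ(x̄; [b,c])`, to substituting it into an `n`-ary one (by dinaturality
and associativity). So every binary or nullary map classifier is automatically left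
universal. A binary map classifier for `(a, b)` is a representation of
`c ↦ 𝔠₂(a, b; c) ≅ C(a, [b,c])`, i.e. a universal arrow from `a` to `[b,-]`; these exist
for all `a` exactly when `[b,-]` has a left adjoint.
-/

namespace ShortMultiStruct

variable {C : Type u} [Category.{v} C] {S : ShortMultiStruct C}

section Classifiers

variable {a b t : C}

theorem IsBinClassifier.bijective_s22_1 {θ : S.M2 a b t} (hθ : S.IsBinClassifier θ)
    {x d h : C} {ev : S.M2 h x d} (hev : S.IsHomObj ev) :
    Function.Bijective (fun g : S.M2 t x d => S.s22_1 g θ) := by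
  have hcomm :
      (fun g : S.M2 t x d => S.s22_1 g θ) ∘ (fun p : t ⟶ h => S.map2 p (𝟙 x) (𝟙 d) ev)
      = S.s22_1 ev ∘ fun p : t ⟶ h => S.map2 (𝟙 a) (𝟙 b) p θ :=
    funext fun p => S.s22_1_dinat p ev θ
  rw [← Function.Bijective.of_comp_iff _ (hev.2.1 t), hcomm]
  exact (hev.2.2.1 a b).comp (hθ h)

theorem IsBinClassifier.bijective_s32_1 {θ : S.M2 a b t} (hS : S.Closed)
    (hθ : S.IsBinClassifier θ) (x y d : C) :
    Function.Bijective (fun g : S.M3 t x y d => S.s32_1 g θ) := by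
  obtain ⟨h, ev, hev⟩ := hS y d
  have hcomm : (fun g : S.M3 t x y d => S.s32_1 g θ) ∘ S.s22_1 ev
      = S.s23_1 ev ∘ fun g : S.M2 t x h => S.s22_1 g θ :=
    funext fun g => (S.assoc_a_11 ev g θ).symm
  rw [← Function.Bijective.of_comp_iff _ (hev.2.2.1 t x), hcomm]
  obtain ⟨_, _, hev'⟩ := hS x h
  exact (hev.2.2.2 a b x).comp (hθ.bijective_s22_1 hev')

theorem IsBinClassifier.isLeftUniversalBin {θ : S.M2 a b t} (hS : S.Closed)
    (hθ : S.IsBinClassifier θ) : S.IsLeftUniversalBin θ :=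
  ⟨hθ, fun x d => (hS x d).elim fun _ ⟨_, hev⟩ => hθ.bijective_s22_1 hev,
    hθ.bijective_s32_1 hS⟩

variable {i : C}

theorem IsNulClassifier.bijective_s20_1 {u : S.M0 i} (hu : S.IsNulClassifier u)
    {x d h : C} {ev : S.M2 h x d} (hev : S.IsHomObj ev) :
    Function.Bijective (fun g : S.M2 i x d => S.s20_1 g u) := by
  have hcomm :
      (fun g : S.M2 i x d => S.s20_1 g u) ∘ (fun p : i ⟶ h => S.map2 p (𝟙 x) (𝟙 d) ev)
      = S.s20_1 ev ∘ fun p : i ⟶ h => S.map0 p u :=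
    funext fun p => S.s20_1_dinat p ev u
  rw [← Function.Bijective.of_comp_iff _ (hev.2.1 i), hcomm]
  exact hev.1.comp (hu h)

theorem IsNulClassifier.bijective_s30_1 {u : S.M0 i} (hS : S.Closed)
    (hu : S.IsNulClassifier u) (x y d : C) :
    Function.Bijective (fun g : S.M3 i x y d => S.s30_1 g u) := by
  obtain ⟨h, ev, hev⟩ := hS y d
  have hcomm : (fun g : S.M3 i x y d => S.s30_1 g u) ∘ S.s22_1 ev
      = (fun p : x ⟶ h => S.map2 p (𝟙 y) (𝟙 d) ev) ∘ fun g : S.M2 i x h => S.s20_1 g u :=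
    funext fun g => (S.assoc_b_11 ev g u).symm
  rw [← Function.Bijective.of_comp_iff _ (hev.2.2.1 i x), hcomm]
  obtain ⟨_, _, hev'⟩ := hS x h
  exact (hev.2.1 x).comp (hu.bijective_s20_1 hev')

theorem IsNulClassifier.isLeftUniversalNul {u : S.M0 i} (hS : S.Closed)
    (hu : S.IsNulClassifier u) : S.IsLeftUniversalNul u :=
  ⟨hu, fun x d => (hS x d).elim fun _ ⟨_, hev⟩ => hu.bijective_s20_1 hev,
    hu.bijective_s30_1 hS⟩

end Classifiers

section Map2

variable {x y z a2 c c' c'' : C}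

theorem map2_comp_first (p : x ⟶ y) (q : y ⟶ z) (E : S.M2 z a2 c) :
    S.map2 (p ≫ q) (𝟙 a2) (𝟙 c) E = S.map2 p (𝟙 a2) (𝟙 c) (S.map2 q (𝟙 a2) (𝟙 c) E) := by
  simp [S.map2_comp]

theorem map2_comp_target (g : c ⟶ c') (g' : c' ⟶ c'') (E : S.M2 x a2 c) :
    S.map2 (𝟙 x) (𝟙 a2) (g ≫ g') E = S.map2 (𝟙 x) (𝟙 a2) g' (S.map2 (𝟙 x) (𝟙 a2) g E) := by
  simp [S.map2_comp]

theorem map2_first_target_comm (p : x ⟶ y) (g : c ⟶ c') (E : S.M2 y a2 c) :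
    S.map2 p (𝟙 a2) (𝟙 c') (S.map2 (𝟙 y) (𝟙 a2) g E)
      = S.map2 (𝟙 x) (𝟙 a2) g (S.map2 p (𝟙 a2) (𝟙 c) E) := by
  simp [S.map2_comp]

end Map2

noncomputable def IsHomObj.uncurry {b c h : C} {e : S.M2 h b c} (he : S.IsHomObj e) (x : C) :
    (x ⟶ h) ≃ S.M2 x b c :=
  Equiv.ofBijective _ (he.2.1 x)

theorem IsHomObj.map2_uncurry_symm {b c h x : C} {e : S.M2 h b c} (he : S.IsHomObj e)
    (g : S.M2 x b c) : S.map2 ((he.uncurry x).symm g) (𝟙 b) (𝟙 c) e = g :=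
  (he.uncurry x).apply_symm_apply g

section HomFunctor

variable (H : C → C → C) (e : ∀ b c : C, S.M2 (H b c) b c)
  (he : ∀ b c : C, S.IsHomObj (e b c))

theorem map2_homFunctor_map {b c c' : C} (g : c ⟶ c') :
    S.map2 ((S.homFunctor H e he b).map g) (𝟙 b) (𝟙 c') (e b c')
      = S.map2 (𝟙 (H b c)) (𝟙 b) g (e b c) :=
  (he b c').map2_uncurry_symm _

theorem map2_comp_homFunctor_map {x b c c' : C} (p : x ⟶ H b c) (g : c ⟶ c') :
    S.map2 (p ≫ (S.homFunctor H e he b).map g) (𝟙 b) (𝟙 c') (e b c')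
      = S.map2 (𝟙 x) (𝟙 b) g (S.map2 p (𝟙 b) (𝟙 c) (e b c)) :=
  calc _ = S.map2 p (𝟙 b) (𝟙 c')
          (S.map2 ((S.homFunctor H e he b).map g) (𝟙 b) (𝟙 c') (e b c')) :=
        S.map2_comp_first p _ _
    _ = S.map2 p (𝟙 b) (𝟙 c') (S.map2 (𝟙 (H b c)) (𝟙 b) g (e b c)) :=
        congrArg _ (S.map2_homFunctor_map H e he g)
    _ = _ := S.map2_first_target_comm p g _

theorem exists_leftAdjoint_homFunctor {b : C}
    (hθ : ∀ a : C, ∃ (t : C) (θ : S.M2 a b t), S.IsBinClassifier θ) :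
    ∃ L : C ⥤ C, Nonempty (L ⊣ S.homFunctor H e he b) := by
  choose t θ hθ using hθ
  refine ⟨Adjunction.leftAdjointOfEquiv (G := S.homFunctor H e he b) (F_obj := t)
      (fun a c => (Equiv.ofBijective _ (hθ a c)).trans ((he b c).uncurry a).symm) ?_,
    ⟨Adjunction.adjunctionOfEquivLeft _ _⟩⟩
  intro a c c' g h
  change ((he b c').uncurry a).symm (S.map2 (𝟙 a) (𝟙 b) (h ≫ g) (θ a))
    = ((he b c).uncurry a).symm (S.map2 (𝟙 a) (𝟙 b) h (θ a)) ≫ (S.homFunctor H e he b).map g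
  refine (Equiv.symm_apply_eq _).2 ?_
  calc S.map2 (𝟙 a) (𝟙 b) (h ≫ g) (θ a)
      = S.map2 (𝟙 a) (𝟙 b) g (S.map2 (𝟙 a) (𝟙 b) h (θ a)) := S.map2_comp_target h g _
    _ = S.map2 (𝟙 a) (𝟙 b) g (S.map2 (((he b c).uncurry a).symm
          (S.map2 (𝟙 a) (𝟙 b) h (θ a))) (𝟙 b) (𝟙 c) (e b c)) := by
        rw [IsHomObj.map2_uncurry_symm]
    _ = _ := (S.map2_comp_homFunctor_map H e he _ g).symm

theorem isBinClassifier_map2_unit {b : C} {L : C ⥤ C} (adj : L ⊣ S.homFunctor H e he b)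
    (a : C) :
    S.IsBinClassifier
      (S.map2 (a1' := a) (a1 := H b (L.obj a)) (adj.unit.app a) (𝟙 b) (𝟙 _) (e b _)) := by
  intro c
  have hcomm : (fun p : L.obj a ⟶ c =>
        S.map2 (𝟙 a) (𝟙 b) p
          (S.map2 (a1' := a) (a1 := H b (L.obj a)) (adj.unit.app a) (𝟙 b) (𝟙 _) (e b _)))
      = (fun q : a ⟶ H b c => S.map2 q (𝟙 b) (𝟙 c) (e b c)) ∘ adj.homEquiv a c := by
    funext p
    change _ = S.map2 (adj.homEquiv a c p) (𝟙 b) (𝟙 c) (e b c)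
    rw [adj.homEquiv_unit]
    exact (S.map2_comp_homFunctor_map H e he _ p).symm
  rw [hcomm]
  exact ((he b c).2.1 a).comp (adj.homEquiv a c).bijective

end HomFunctor

end ShortMultiStruct

open ShortMultiStruct in
/-- **Statement 12** (Proposition 2.5 of Bourke–Lobbia). A closed short
multicategory `𝔠` — with closed structure given by internal homs `H b c` and
evaluation binary multimaps `e_{b,c} : [b,c], b → c` — is left representable if
and only if it has a nullary map classifier and, for each object `b`, the
functor `[b,-] : C ⥤ C` induced by the closed structure has a left adjoint. -/
theorem stmt_12 {C : Type u} [Category.{v} C] (S : ShortMultiStruct C)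
    (H : C → C → C) (e : ∀ b c : C, S.M2 (H b c) b c)
    (he : ∀ b c : C, S.IsHomObj (e b c)) :
    S.LeftRepresentable ↔
      ((∃ (i : C) (u : S.M0 i), S.IsNulClassifier u) ∧
        ∀ b : C, ∃ L : C ⥤ C, Nonempty (L ⊣ S.homFunctor H e he b)) := by
  have hS : S.Closed := fun b c => ⟨H b c, e b c, he b c⟩
  constructor
  · rintro ⟨hbin, i, u, hu⟩
    refine ⟨⟨i, u, hu.1⟩, fun b => exists_leftAdjoint_homFunctor H e he fun a => ?_⟩
    obtain ⟨t, θ, hθ⟩ := hbin a b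
    exact ⟨t, θ, hθ.1⟩
  · rintro ⟨⟨i, u, hu⟩, hadj⟩
    refine ⟨fun a b => ?_, i, u, hu.isLeftUniversalNul hS⟩
    obtain ⟨L, ⟨adj⟩⟩ := hadj b
    exact ⟨_, _, (isBinClassifier_map2_unit H e he adj a).isLeftUniversalBin hS⟩
end

section
/- Let 𝔠 be a left representable short skew multicategory equipped with a short braiding. Then the unique natural family of isomorphisms s_{x,a,b} : (xa)b → (xb)a determined by s∘(θ_{xa,b}∘₁θ_{x,a}) = β³₂(θ_{xb,a}∘₁θ_{x,b}) is a braiding on the skew monoidal category K^s𝔠; moreover, if the short braiding is a short symmetry then this braiding is a symmetry. -/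
open CategoryTheory

universe v u

/-- A *short skew multicategory* structure on a category `C` (Bourke–Lobbia).
The tight unary multimaps are exactly the morphisms of `C`; there are tight
`n`-ary multimaps for `1 ≤ n ≤ 4` and loose `n`-ary multimaps for `n = 0,1,2`,
with comparison maps `j` from tight to loose, functorial actions of tight unary
maps, and the substitution operations (tight binary into tight binary/ternary,
tight ternary into tight binary, nullary into tight binary/ternary, nullary
into loose unary, loose unary into tight binary, tight binary into loose
unary), natural in every variable except the substituted one and dinatural in
that one, subject to the associativity and interchange equations and the
naturality of `j`.  The result of a substitution is tight exactly when the
outer multimap is tight and any multimap substituted in the first position is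
tight. -/
structure ShortSkewMultiStruct (C : Type u) [Category.{v} C] where
  /-- tight binary multimaps -/
  T2 : C → C → C → Type v
  /-- tight ternary multimaps -/
  T3 : C → C → C → C → Type v
  /-- tight 4-ary multimaps -/
  T4 : C → C → C → C → C → Type v
  /-- (loose) nullary multimaps -/
  L0 : C → Type v
  /-- loose unary multimaps -/
  L1 : C → C → Type v
  /-- loose binary multimaps -/
  L2 : C → C → C → Type v
  /-- comparison of tight unary multimaps (= morphisms of `C`) into loose ones -/
  j1 : ∀ {a b : C}, (a ⟶ b) → L1 a b
  /-- comparison of tight binary multimaps into loose ones -/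
  j2 : ∀ {a b c : C}, T2 a b c → L2 a b c
  mapT2 : ∀ {a1' a1 a2' a2 b b' : C},
    (a1' ⟶ a1) → (a2' ⟶ a2) → (b ⟶ b') → T2 a1 a2 b → T2 a1' a2' b'
  mapT3 : ∀ {a1' a1 a2' a2 a3' a3 b b' : C},
    (a1' ⟶ a1) → (a2' ⟶ a2) → (a3' ⟶ a3) → (b ⟶ b') → T3 a1 a2 a3 b → T3 a1' a2' a3' b'
  mapT4 : ∀ {a1' a1 a2' a2 a3' a3 a4' a4 b b' : C},
    (a1' ⟶ a1) → (a2' ⟶ a2) → (a3' ⟶ a3) → (a4' ⟶ a4) → (b ⟶ b') →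
      T4 a1 a2 a3 a4 b → T4 a1' a2' a3' a4' b'
  mapL0 : ∀ {b b' : C}, (b ⟶ b') → L0 b → L0 b'
  mapL1 : ∀ {a' a b b' : C}, (a' ⟶ a) → (b ⟶ b') → L1 a b → L1 a' b'
  mapL2 : ∀ {a1' a1 a2' a2 b b' : C},
    (a1' ⟶ a1) → (a2' ⟶ a2) → (b ⟶ b') → L2 a1 a2 b → L2 a1' a2' b'
  mapT2_id : ∀ {a1 a2 b : C} (x : T2 a1 a2 b), mapT2 (𝟙 a1) (𝟙 a2) (𝟙 b) x = x
  mapT2_comp : ∀ {a1'' a1' a1 a2'' a2' a2 b b' b'' : C}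
    (p1' : a1'' ⟶ a1') (p1 : a1' ⟶ a1) (p2' : a2'' ⟶ a2') (p2 : a2' ⟶ a2)
    (q : b ⟶ b') (q' : b' ⟶ b'') (x : T2 a1 a2 b),
    mapT2 p1' p2' q' (mapT2 p1 p2 q x) = mapT2 (p1' ≫ p1) (p2' ≫ p2) (q ≫ q') x
  mapT3_id : ∀ {a1 a2 a3 b : C} (x : T3 a1 a2 a3 b),
    mapT3 (𝟙 a1) (𝟙 a2) (𝟙 a3) (𝟙 b) x = x
  mapT3_comp : ∀ {a1'' a1' a1 a2'' a2' a2 a3'' a3' a3 b b' b'' : C}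
    (p1' : a1'' ⟶ a1') (p1 : a1' ⟶ a1) (p2' : a2'' ⟶ a2') (p2 : a2' ⟶ a2)
    (p3' : a3'' ⟶ a3') (p3 : a3' ⟶ a3) (q : b ⟶ b') (q' : b' ⟶ b'') (x : T3 a1 a2 a3 b),
    mapT3 p1' p2' p3' q' (mapT3 p1 p2 p3 q x)
      = mapT3 (p1' ≫ p1) (p2' ≫ p2) (p3' ≫ p3) (q ≫ q') x
  mapT4_id : ∀ {a1 a2 a3 a4 b : C} (x : T4 a1 a2 a3 a4 b),
    mapT4 (𝟙 a1) (𝟙 a2) (𝟙 a3) (𝟙 a4) (𝟙 b) x = x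
  mapT4_comp : ∀ {a1'' a1' a1 a2'' a2' a2 a3'' a3' a3 a4'' a4' a4 b b' b'' : C}
    (p1' : a1'' ⟶ a1') (p1 : a1' ⟶ a1) (p2' : a2'' ⟶ a2') (p2 : a2' ⟶ a2)
    (p3' : a3'' ⟶ a3') (p3 : a3' ⟶ a3) (p4' : a4'' ⟶ a4') (p4 : a4' ⟶ a4)
    (q : b ⟶ b') (q' : b' ⟶ b'') (x : T4 a1 a2 a3 a4 b),
    mapT4 p1' p2' p3' p4' q' (mapT4 p1 p2 p3 p4 q x)
      = mapT4 (p1' ≫ p1) (p2' ≫ p2) (p3' ≫ p3) (p4' ≫ p4) (q ≫ q') x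
  mapL0_id : ∀ {b : C} (x : L0 b), mapL0 (𝟙 b) x = x
  mapL0_comp : ∀ {b b' b'' : C} (q : b ⟶ b') (q' : b' ⟶ b'') (x : L0 b),
    mapL0 q' (mapL0 q x) = mapL0 (q ≫ q') x
  mapL1_id : ∀ {a b : C} (x : L1 a b), mapL1 (𝟙 a) (𝟙 b) x = x
  mapL1_comp : ∀ {a'' a' a b b' b'' : C} (p' : a'' ⟶ a') (p : a' ⟶ a)
    (q : b ⟶ b') (q' : b' ⟶ b'') (x : L1 a b),
    mapL1 p' q' (mapL1 p q x) = mapL1 (p' ≫ p) (q ≫ q') x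
  mapL2_id : ∀ {a1 a2 b : C} (x : L2 a1 a2 b), mapL2 (𝟙 a1) (𝟙 a2) (𝟙 b) x = x
  mapL2_comp : ∀ {a1'' a1' a1 a2'' a2' a2 b b' b'' : C}
    (p1' : a1'' ⟶ a1') (p1 : a1' ⟶ a1) (p2' : a2'' ⟶ a2') (p2 : a2' ⟶ a2)
    (q : b ⟶ b') (q' : b' ⟶ b'') (x : L2 a1 a2 b),
    mapL2 p1' p2' q' (mapL2 p1 p2 q x) = mapL2 (p1' ≫ p1) (p2' ≫ p2) (q ≫ q') x
  j1_nat : ∀ {a' a b b' : C} (q : a' ⟶ a) (p : a ⟶ b) (r : b ⟶ b'),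
    j1 (q ≫ p ≫ r) = mapL1 q r (j1 p)
  j2_nat : ∀ {a1' a1 a2' a2 b b' : C} (p1 : a1' ⟶ a1) (p2 : a2' ⟶ a2) (q : b ⟶ b')
    (x : T2 a1 a2 b), j2 (mapT2 p1 p2 q x) = mapL2 p1 p2 q (j2 x)
  /-- substitution of a tight binary into the 1st variable of a tight binary -/
  tt22_1 : ∀ {b1 b2 c a1 a2 : C}, T2 b1 b2 c → T2 a1 a2 b1 → T3 a1 a2 b2 c
  tt22_2 : ∀ {b1 b2 c a1 a2 : C}, T2 b1 b2 c → T2 a1 a2 b2 → T3 b1 a1 a2 c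
  /-- substitution of a tight binary into a tight ternary -/
  tt32_1 : ∀ {b1 b2 b3 c a1 a2 : C}, T3 b1 b2 b3 c → T2 a1 a2 b1 → T4 a1 a2 b2 b3 c
  tt32_2 : ∀ {b1 b2 b3 c a1 a2 : C}, T3 b1 b2 b3 c → T2 a1 a2 b2 → T4 b1 a1 a2 b3 c
  tt32_3 : ∀ {b1 b2 b3 c a1 a2 : C}, T3 b1 b2 b3 c → T2 a1 a2 b3 → T4 b1 b2 a1 a2 c
  /-- substitution of a tight ternary into a tight binary -/
  tt23_1 : ∀ {b1 b2 c a1 a2 a3 : C}, T2 b1 b2 c → T3 a1 a2 a3 b1 → T4 a1 a2 a3 b2 c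
  tt23_2 : ∀ {b1 b2 c a1 a2 a3 : C}, T2 b1 b2 c → T3 a1 a2 a3 b2 → T4 b1 a1 a2 a3 c
  /-- substitution of a nullary into the 1st variable of a tight binary
  (the result is a loose unary map) -/
  s20_1 : ∀ {b1 b2 c : C}, T2 b1 b2 c → L0 b1 → L1 b2 c
  /-- substitution of a nullary into the 2nd variable of a tight binary
  (the result is a tight unary map, i.e. a morphism of `C`) -/
  s20_2 : ∀ {b1 b2 c : C}, T2 b1 b2 c → L0 b2 → (b1 ⟶ c)
  /-- substitution of a nullary into a tight ternary -/
  s30_1 : ∀ {b1 b2 b3 c : C}, T3 b1 b2 b3 c → L0 b1 → L2 b2 b3 c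
  s30_2 : ∀ {b1 b2 b3 c : C}, T3 b1 b2 b3 c → L0 b2 → T2 b1 b3 c
  s30_3 : ∀ {b1 b2 b3 c : C}, T3 b1 b2 b3 c → L0 b3 → T2 b1 b2 c
  /-- substitution of a nullary into a loose unary -/
  sL10 : ∀ {b c : C}, L1 b c → L0 b → L0 c
  /-- substitution of a loose unary into the 1st variable of a tight binary -/
  sl21_1 : ∀ {b1 b2 c a : C}, T2 b1 b2 c → L1 a b1 → L2 a b2 c
  /-- substitution of a loose unary into the 2nd variable of a tight binary -/
  sl21_2 : ∀ {b1 b2 c a : C}, T2 b1 b2 c → L1 a b2 → T2 b1 a c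
  /-- substitution of a tight binary into a loose unary -/
  sl12 : ∀ {b c a1 a2 : C}, L1 b c → T2 a1 a2 b → L2 a1 a2 c
  -- naturality and dinaturality of the substitutions
  tt22_1_nat : ∀ {a1' a1 a2' a2 b1 b2' b2 c c' : C} (p1 : a1' ⟶ a1) (p2 : a2' ⟶ a2)
    (q : b2' ⟶ b2) (r : c ⟶ c') (g : T2 b1 b2 c) (f : T2 a1 a2 b1),
    mapT3 p1 p2 q r (tt22_1 g f) = tt22_1 (mapT2 (𝟙 b1) q r g) (mapT2 p1 p2 (𝟙 b1) f)
  tt22_1_dinat : ∀ {a1 a2 b1 b1' b2 c : C} (h : b1 ⟶ b1') (g : T2 b1' b2 c)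
    (f : T2 a1 a2 b1),
    tt22_1 (mapT2 h (𝟙 b2) (𝟙 c) g) f = tt22_1 g (mapT2 (𝟙 a1) (𝟙 a2) h f)
  tt22_2_nat : ∀ {a1' a1 a2' a2 b1' b1 b2 c c' : C} (p1 : a1' ⟶ a1) (p2 : a2' ⟶ a2)
    (q : b1' ⟶ b1) (r : c ⟶ c') (g : T2 b1 b2 c) (f : T2 a1 a2 b2),
    mapT3 q p1 p2 r (tt22_2 g f) = tt22_2 (mapT2 q (𝟙 b2) r g) (mapT2 p1 p2 (𝟙 b2) f)
  tt22_2_dinat : ∀ {a1 a2 b1 b2 b2' c : C} (h : b2 ⟶ b2') (g : T2 b1 b2' c)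
    (f : T2 a1 a2 b2),
    tt22_2 (mapT2 (𝟙 b1) h (𝟙 c) g) f = tt22_2 g (mapT2 (𝟙 a1) (𝟙 a2) h f)
  tt32_1_nat : ∀ {a1' a1 a2' a2 b1 b2' b2 b3' b3 c c' : C} (p1 : a1' ⟶ a1)
    (p2 : a2' ⟶ a2) (q2 : b2' ⟶ b2) (q3 : b3' ⟶ b3) (r : c ⟶ c')
    (g : T3 b1 b2 b3 c) (f : T2 a1 a2 b1),
    mapT4 p1 p2 q2 q3 r (tt32_1 g f)
      = tt32_1 (mapT3 (𝟙 b1) q2 q3 r g) (mapT2 p1 p2 (𝟙 b1) f)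
  tt32_1_dinat : ∀ {a1 a2 b1 b1' b2 b3 c : C} (h : b1 ⟶ b1') (g : T3 b1' b2 b3 c)
    (f : T2 a1 a2 b1),
    tt32_1 (mapT3 h (𝟙 b2) (𝟙 b3) (𝟙 c) g) f = tt32_1 g (mapT2 (𝟙 a1) (𝟙 a2) h f)
  tt32_2_nat : ∀ {a1' a1 a2' a2 b1' b1 b2 b3' b3 c c' : C} (p1 : a1' ⟶ a1)
    (p2 : a2' ⟶ a2) (q1 : b1' ⟶ b1) (q3 : b3' ⟶ b3) (r : c ⟶ c')
    (g : T3 b1 b2 b3 c) (f : T2 a1 a2 b2),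
    mapT4 q1 p1 p2 q3 r (tt32_2 g f)
      = tt32_2 (mapT3 q1 (𝟙 b2) q3 r g) (mapT2 p1 p2 (𝟙 b2) f)
  tt32_2_dinat : ∀ {a1 a2 b1 b2 b2' b3 c : C} (h : b2 ⟶ b2') (g : T3 b1 b2' b3 c)
    (f : T2 a1 a2 b2),
    tt32_2 (mapT3 (𝟙 b1) h (𝟙 b3) (𝟙 c) g) f = tt32_2 g (mapT2 (𝟙 a1) (𝟙 a2) h f)
  tt32_3_nat : ∀ {a1' a1 a2' a2 b1' b1 b2' b2 b3 c c' : C} (p1 : a1' ⟶ a1)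
    (p2 : a2' ⟶ a2) (q1 : b1' ⟶ b1) (q2 : b2' ⟶ b2) (r : c ⟶ c')
    (g : T3 b1 b2 b3 c) (f : T2 a1 a2 b3),
    mapT4 q1 q2 p1 p2 r (tt32_3 g f)
      = tt32_3 (mapT3 q1 q2 (𝟙 b3) r g) (mapT2 p1 p2 (𝟙 b3) f)
  tt32_3_dinat : ∀ {a1 a2 b1 b2 b3 b3' c : C} (h : b3 ⟶ b3') (g : T3 b1 b2 b3' c)
    (f : T2 a1 a2 b3),
    tt32_3 (mapT3 (𝟙 b1) (𝟙 b2) h (𝟙 c) g) f = tt32_3 g (mapT2 (𝟙 a1) (𝟙 a2) h f)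
  tt23_1_nat : ∀ {a1' a1 a2' a2 a3' a3 b1 b2' b2 c c' : C}
    (p1 : a1' ⟶ a1) (p2 : a2' ⟶ a2) (p3 : a3' ⟶ a3) (q : b2' ⟶ b2) (r : c ⟶ c')
    (g : T2 b1 b2 c) (f : T3 a1 a2 a3 b1),
    mapT4 p1 p2 p3 q r (tt23_1 g f)
      = tt23_1 (mapT2 (𝟙 b1) q r g) (mapT3 p1 p2 p3 (𝟙 b1) f)
  tt23_1_dinat : ∀ {a1 a2 a3 b1 b1' b2 c : C} (h : b1 ⟶ b1') (g : T2 b1' b2 c)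
    (f : T3 a1 a2 a3 b1),
    tt23_1 (mapT2 h (𝟙 b2) (𝟙 c) g) f = tt23_1 g (mapT3 (𝟙 a1) (𝟙 a2) (𝟙 a3) h f)
  tt23_2_nat : ∀ {a1' a1 a2' a2 a3' a3 b1' b1 b2 c c' : C}
    (p1 : a1' ⟶ a1) (p2 : a2' ⟶ a2) (p3 : a3' ⟶ a3) (q : b1' ⟶ b1) (r : c ⟶ c')
    (g : T2 b1 b2 c) (f : T3 a1 a2 a3 b2),
    mapT4 q p1 p2 p3 r (tt23_2 g f)
      = tt23_2 (mapT2 q (𝟙 b2) r g) (mapT3 p1 p2 p3 (𝟙 b2) f)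
  tt23_2_dinat : ∀ {a1 a2 a3 b1 b2 b2' c : C} (h : b2 ⟶ b2') (g : T2 b1 b2' c)
    (f : T3 a1 a2 a3 b2),
    tt23_2 (mapT2 (𝟙 b1) h (𝟙 c) g) f = tt23_2 g (mapT3 (𝟙 a1) (𝟙 a2) (𝟙 a3) h f)
  s20_1_nat : ∀ {b1 b2' b2 c c' : C} (q : b2' ⟶ b2) (r : c ⟶ c')
    (g : T2 b1 b2 c) (u : L0 b1),
    mapL1 q r (s20_1 g u) = s20_1 (mapT2 (𝟙 b1) q r g) u
  s20_1_dinat : ∀ {b1 b1' b2 c : C} (h : b1 ⟶ b1') (g : T2 b1' b2 c) (u : L0 b1),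
    s20_1 (mapT2 h (𝟙 b2) (𝟙 c) g) u = s20_1 g (mapL0 h u)
  s20_2_nat : ∀ {b1' b1 b2 c c' : C} (q : b1' ⟶ b1) (r : c ⟶ c')
    (g : T2 b1 b2 c) (u : L0 b2),
    q ≫ s20_2 g u ≫ r = s20_2 (mapT2 q (𝟙 b2) r g) u
  s20_2_dinat : ∀ {b1 b2 b2' c : C} (h : b2 ⟶ b2') (g : T2 b1 b2' c) (u : L0 b2),
    s20_2 (mapT2 (𝟙 b1) h (𝟙 c) g) u = s20_2 g (mapL0 h u)
  s30_1_nat : ∀ {b1 b2' b2 b3' b3 c c' : C} (q2 : b2' ⟶ b2) (q3 : b3' ⟶ b3)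
    (r : c ⟶ c') (g : T3 b1 b2 b3 c) (u : L0 b1),
    mapL2 q2 q3 r (s30_1 g u) = s30_1 (mapT3 (𝟙 b1) q2 q3 r g) u
  s30_1_dinat : ∀ {b1 b1' b2 b3 c : C} (h : b1 ⟶ b1') (g : T3 b1' b2 b3 c) (u : L0 b1),
    s30_1 (mapT3 h (𝟙 b2) (𝟙 b3) (𝟙 c) g) u = s30_1 g (mapL0 h u)
  s30_2_nat : ∀ {b1' b1 b2 b3' b3 c c' : C} (q1 : b1' ⟶ b1) (q3 : b3' ⟶ b3)
    (r : c ⟶ c') (g : T3 b1 b2 b3 c) (u : L0 b2),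
    mapT2 q1 q3 r (s30_2 g u) = s30_2 (mapT3 q1 (𝟙 b2) q3 r g) u
  s30_2_dinat : ∀ {b1 b2 b2' b3 c : C} (h : b2 ⟶ b2') (g : T3 b1 b2' b3 c) (u : L0 b2),
    s30_2 (mapT3 (𝟙 b1) h (𝟙 b3) (𝟙 c) g) u = s30_2 g (mapL0 h u)
  s30_3_nat : ∀ {b1' b1 b2' b2 b3 c c' : C} (q1 : b1' ⟶ b1) (q2 : b2' ⟶ b2)
    (r : c ⟶ c') (g : T3 b1 b2 b3 c) (u : L0 b3),
    mapT2 q1 q2 r (s30_3 g u) = s30_3 (mapT3 q1 q2 (𝟙 b3) r g) u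
  s30_3_dinat : ∀ {b1 b2 b3 b3' c : C} (h : b3 ⟶ b3') (g : T3 b1 b2 b3' c) (u : L0 b3),
    s30_3 (mapT3 (𝟙 b1) (𝟙 b2) h (𝟙 c) g) u = s30_3 g (mapL0 h u)
  sL10_nat : ∀ {b c c' : C} (r : c ⟶ c') (q : L1 b c) (v : L0 b),
    mapL0 r (sL10 q v) = sL10 (mapL1 (𝟙 b) r q) v
  sL10_dinat : ∀ {b b' c : C} (h : b ⟶ b') (q : L1 b' c) (v : L0 b),
    sL10 (mapL1 h (𝟙 c) q) v = sL10 q (mapL0 h v)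
  sl21_1_nat : ∀ {a' a b1 b2' b2 c c' : C} (pa : a' ⟶ a) (q : b2' ⟶ b2) (r : c ⟶ c')
    (g : T2 b1 b2 c) (p : L1 a b1),
    mapL2 pa q r (sl21_1 g p) = sl21_1 (mapT2 (𝟙 b1) q r g) (mapL1 pa (𝟙 b1) p)
  sl21_1_dinat : ∀ {a b1 b1' b2 c : C} (h : b1 ⟶ b1') (g : T2 b1' b2 c) (p : L1 a b1),
    sl21_1 (mapT2 h (𝟙 b2) (𝟙 c) g) p = sl21_1 g (mapL1 (𝟙 a) h p)
  sl21_2_nat : ∀ {a' a b1' b1 b2 c c' : C} (pa : a' ⟶ a) (q : b1' ⟶ b1) (r : c ⟶ c')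
    (g : T2 b1 b2 c) (p : L1 a b2),
    mapT2 q pa r (sl21_2 g p) = sl21_2 (mapT2 q (𝟙 b2) r g) (mapL1 pa (𝟙 b2) p)
  sl21_2_dinat : ∀ {a b1 b2 b2' c : C} (h : b2 ⟶ b2') (g : T2 b1 b2' c) (p : L1 a b2),
    sl21_2 (mapT2 (𝟙 b1) h (𝟙 c) g) p = sl21_2 g (mapL1 (𝟙 a) h p)
  sl12_nat : ∀ {a1' a1 a2' a2 b c c' : C} (p1 : a1' ⟶ a1) (p2 : a2' ⟶ a2) (r : c ⟶ c')
    (q : L1 b c) (g : T2 a1 a2 b),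
    mapL2 p1 p2 r (sl12 q g) = sl12 (mapL1 (𝟙 b) r q) (mapT2 p1 p2 (𝟙 b) g)
  sl12_dinat : ∀ {a1 a2 b b' c : C} (h : b ⟶ b') (q : L1 b' c) (g : T2 a1 a2 b),
    sl12 (mapL1 h (𝟙 c) q) g = sl12 q (mapT2 (𝟙 a1) (𝟙 a2) h g)
  -- compatibility of `j` with substitutions
  j_sl21_1 : ∀ {a b1 b2 c : C} (g : T2 b1 b2 c) (p : a ⟶ b1),
    sl21_1 g (j1 p) = j2 (mapT2 p (𝟙 b2) (𝟙 c) g)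
  j_sl21_2 : ∀ {a b1 b2 c : C} (g : T2 b1 b2 c) (p : a ⟶ b2),
    sl21_2 g (j1 p) = mapT2 (𝟙 b1) p (𝟙 c) g
  j_sl12 : ∀ {a1 a2 b c : C} (p : b ⟶ c) (g : T2 a1 a2 b),
    sl12 (j1 p) g = j2 (mapT2 (𝟙 a1) (𝟙 a2) p g)
  j_sL10 : ∀ {b c : C} (p : b ⟶ c) (v : L0 b),
    sL10 (j1 p) v = mapL0 p v
  -- associativity equations (`f`, `g` tight binary)
  assoc_a_11 : ∀ {x1 x2 c b1 b2 a1 a2 : C} (f : T2 x1 x2 c) (g : T2 b1 b2 x1)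
    (h : T2 a1 a2 b1), tt23_1 f (tt22_1 g h) = tt32_1 (tt22_1 f g) h
  assoc_a_12 : ∀ {x1 x2 c b1 b2 a1 a2 : C} (f : T2 x1 x2 c) (g : T2 b1 b2 x1)
    (h : T2 a1 a2 b2), tt23_1 f (tt22_2 g h) = tt32_2 (tt22_1 f g) h
  assoc_a_21 : ∀ {x1 x2 c b1 b2 a1 a2 : C} (f : T2 x1 x2 c) (g : T2 b1 b2 x2)
    (h : T2 a1 a2 b1), tt23_2 f (tt22_1 g h) = tt32_2 (tt22_2 f g) h
  assoc_a_22 : ∀ {x1 x2 c b1 b2 a1 a2 : C} (f : T2 x1 x2 c) (g : T2 b1 b2 x2)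
    (h : T2 a1 a2 b2), tt23_2 f (tt22_2 g h) = tt32_3 (tt22_2 f g) h
  assoc_b_11 : ∀ {x1 x2 c b1 b2 : C} (f : T2 x1 x2 c) (g : T2 b1 b2 x1) (u : L0 b1),
    sl21_1 f (s20_1 g u) = s30_1 (tt22_1 f g) u
  assoc_b_12 : ∀ {x1 x2 c b1 b2 : C} (f : T2 x1 x2 c) (g : T2 b1 b2 x1) (u : L0 b2),
    mapT2 (s20_2 g u) (𝟙 x2) (𝟙 c) f = s30_2 (tt22_1 f g) u
  assoc_b_21 : ∀ {x1 x2 c b1 b2 : C} (f : T2 x1 x2 c) (g : T2 b1 b2 x2) (u : L0 b1),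
    sl21_2 f (s20_1 g u) = s30_2 (tt22_2 f g) u
  assoc_b_22 : ∀ {x1 x2 c b1 b2 : C} (f : T2 x1 x2 c) (g : T2 b1 b2 x2) (u : L0 b2),
    mapT2 (𝟙 x1) (s20_2 g u) (𝟙 c) f = s30_3 (tt22_2 f g) u
  -- interchange equations
  inter_a : ∀ {x1 x2 c a1 a2 b1 b2 : C} (f : T2 x1 x2 c) (g : T2 a1 a2 x1)
    (h : T2 b1 b2 x2), tt32_3 (tt22_1 f g) h = tt32_1 (tt22_2 f h) g
  inter_b : ∀ {x1 x2 c a1 a2 : C} (f : T2 x1 x2 c) (g : T2 a1 a2 x1) (u : L0 x2),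
    s30_3 (tt22_1 f g) u = mapT2 (𝟙 a1) (𝟙 a2) (s20_2 f u) g
  inter_c : ∀ {x1 x2 c b1 b2 : C} (f : T2 x1 x2 c) (h : T2 b1 b2 x2) (u : L0 x1),
    sl12 (s20_1 f u) h = s30_1 (tt22_2 f h) u
  inter_d : ∀ {x1 x2 c : C} (f : T2 x1 x2 c) (u : L0 x1) (v : L0 x2),
    sL10 (s20_1 f u) v = mapL0 (s20_2 f v) u

namespace ShortSkewMultiStruct

variable {C : Type u} [Category.{v} C] (S : ShortSkewMultiStruct C)

/-- `θ ∈ 𝔠₂ᵗ(a,b; t)` is a tight binary map classifier. -/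
def IsBinClassifier {a b t : C} (θ : S.T2 a b t) : Prop :=
  ∀ c : C, Function.Bijective (fun p : t ⟶ c => S.mapT2 (𝟙 a) (𝟙 b) p θ)

/-- A tight binary map classifier is left universal if substitution into the
first variable of tight binary and ternary multimaps is also bijective. -/
def IsLeftUniversalBin {a b t : C} (θ : S.T2 a b t) : Prop :=
  S.IsBinClassifier θ ∧
  (∀ x d : C, Function.Bijective (fun g : S.T2 t x d => S.tt22_1 g θ)) ∧
  (∀ x y d : C, Function.Bijective (fun g : S.T3 t x y d => S.tt32_1 g θ))

/-- `u ∈ 𝔠₀ˡ(; i)` is a nullary map classifier: substitution of `u` into tight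
unary maps gives a bijection onto nullary maps. -/
def IsNulClassifier {i : C} (u : S.L0 i) : Prop :=
  ∀ d : C, Function.Bijective (fun p : i ⟶ d => S.mapL0 p u)

/-- A nullary map classifier is left universal if the substitutions
`𝔠ᵗ_{1+n}(i,x̄;d) → 𝔠ˡ_n(x̄;d)` are also bijective for `n = 1, 2`. -/
def IsLeftUniversalNul {i : C} (u : S.L0 i) : Prop :=
  S.IsNulClassifier u ∧
  (∀ x d : C, Function.Bijective (fun g : S.T2 i x d => S.s20_1 g u)) ∧
  (∀ x y d : C, Function.Bijective (fun g : S.T3 i x y d => S.s30_1 g u))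

/-- A short skew multicategory is *left representable* if it admits left
universal nullary and tight binary map classifiers. -/
def LeftRepresentable : Prop :=
  (∀ a b : C, ∃ (t : C) (θ : S.T2 a b t), S.IsLeftUniversalBin θ) ∧
  (∃ (i : C) (u : S.L0 i), S.IsLeftUniversalNul u)

/-- `e ∈ 𝔠₂ᵗ([b,c], b; c)` exhibits `h = [b,c]` as an internal hom of a short
skew multicategory: substitution into the first variable of `e` induces
bijections `𝔠ᵗₙ(x̄;[b,c]) ≅ 𝔠ᵗₙ₊₁(x̄,b;c)` for `n = 1,2,3` and
`𝔠ˡₙ(x̄;[b,c]) ≅ 𝔠ˡₙ₊₁(x̄,b;c)` for `n = 0,1`. -/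
def IsHomObj {b c h : C} (e : S.T2 h b c) : Prop :=
  (∀ x : C, Function.Bijective (fun p : x ⟶ h => S.mapT2 p (𝟙 b) (𝟙 c) e)) ∧
  (∀ x y : C, Function.Bijective (fun g : S.T2 x y h => S.tt22_1 e g)) ∧
  (∀ x y z : C, Function.Bijective (fun g : S.T3 x y z h => S.tt23_1 e g)) ∧
  Function.Bijective (fun v : S.L0 h => S.s20_1 e v) ∧
  (∀ x : C, Function.Bijective (fun q : S.L1 x h => S.sl21_1 e q))

/-- A short skew multicategory is *closed* when every pair of objects admits
an internal hom. -/
def Closed : Prop := ∀ b c : C, ∃ (h : C) (e : S.T2 h b c), S.IsHomObj e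

end ShortSkewMultiStruct

/-- A bundled short skew multicategory. -/
structure ShortSkewMulticat : Type (max (u + 1) (v + 1)) where
  C : Type u
  [inst : Category.{v} C]
  S : ShortSkewMultiStruct C

attribute [instance] ShortSkewMulticat.inst

/-- A morphism of short skew multicategories: a functor together with natural
families on tight (`1 ≤ i ≤ 4`) and loose (`0 ≤ i ≤ 2`) multimaps commuting
with all substitutions and with the comparisons `j`. -/
structure ShortSkewMultiHom (X Y : ShortSkewMulticat.{u, v}) : Type (max u v) where
  F : X.C ⥤ Y.C
  Ft2 : ∀ {a1 a2 b : X.C}, X.S.T2 a1 a2 b → Y.S.T2 (F.obj a1) (F.obj a2) (F.obj b)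
  Ft3 : ∀ {a1 a2 a3 b : X.C},
    X.S.T3 a1 a2 a3 b → Y.S.T3 (F.obj a1) (F.obj a2) (F.obj a3) (F.obj b)
  Ft4 : ∀ {a1 a2 a3 a4 b : X.C},
    X.S.T4 a1 a2 a3 a4 b → Y.S.T4 (F.obj a1) (F.obj a2) (F.obj a3) (F.obj a4) (F.obj b)
  Fl0 : ∀ {b : X.C}, X.S.L0 b → Y.S.L0 (F.obj b)
  Fl1 : ∀ {a b : X.C}, X.S.L1 a b → Y.S.L1 (F.obj a) (F.obj b)
  Fl2 : ∀ {a1 a2 b : X.C}, X.S.L2 a1 a2 b → Y.S.L2 (F.obj a1) (F.obj a2) (F.obj b)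
  Ft2_nat : ∀ {a1' a1 a2' a2 b b' : X.C} (p1 : a1' ⟶ a1) (p2 : a2' ⟶ a2) (q : b ⟶ b')
    (x : X.S.T2 a1 a2 b),
    Ft2 (X.S.mapT2 p1 p2 q x) = Y.S.mapT2 (F.map p1) (F.map p2) (F.map q) (Ft2 x)
  Ft3_nat : ∀ {a1' a1 a2' a2 a3' a3 b b' : X.C} (p1 : a1' ⟶ a1) (p2 : a2' ⟶ a2)
    (p3 : a3' ⟶ a3) (q : b ⟶ b') (x : X.S.T3 a1 a2 a3 b),
    Ft3 (X.S.mapT3 p1 p2 p3 q x)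
      = Y.S.mapT3 (F.map p1) (F.map p2) (F.map p3) (F.map q) (Ft3 x)
  Ft4_nat : ∀ {a1' a1 a2' a2 a3' a3 a4' a4 b b' : X.C} (p1 : a1' ⟶ a1) (p2 : a2' ⟶ a2)
    (p3 : a3' ⟶ a3) (p4 : a4' ⟶ a4) (q : b ⟶ b') (x : X.S.T4 a1 a2 a3 a4 b),
    Ft4 (X.S.mapT4 p1 p2 p3 p4 q x)
      = Y.S.mapT4 (F.map p1) (F.map p2) (F.map p3) (F.map p4) (F.map q) (Ft4 x)
  Fl0_nat : ∀ {b b' : X.C} (q : b ⟶ b') (x : X.S.L0 b),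
    Fl0 (X.S.mapL0 q x) = Y.S.mapL0 (F.map q) (Fl0 x)
  Fl1_nat : ∀ {a' a b b' : X.C} (p : a' ⟶ a) (q : b ⟶ b') (x : X.S.L1 a b),
    Fl1 (X.S.mapL1 p q x) = Y.S.mapL1 (F.map p) (F.map q) (Fl1 x)
  Fl2_nat : ∀ {a1' a1 a2' a2 b b' : X.C} (p1 : a1' ⟶ a1) (p2 : a2' ⟶ a2) (q : b ⟶ b')
    (x : X.S.L2 a1 a2 b),
    Fl2 (X.S.mapL2 p1 p2 q x) = Y.S.mapL2 (F.map p1) (F.map p2) (F.map q) (Fl2 x)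
  comm_j1 : ∀ {a b : X.C} (p : a ⟶ b), Fl1 (X.S.j1 p) = Y.S.j1 (F.map p)
  comm_j2 : ∀ {a b c : X.C} (x : X.S.T2 a b c), Fl2 (X.S.j2 x) = Y.S.j2 (Ft2 x)
  comm_tt22_1 : ∀ {b1 b2 c a1 a2 : X.C} (g : X.S.T2 b1 b2 c) (f : X.S.T2 a1 a2 b1),
    Ft3 (X.S.tt22_1 g f) = Y.S.tt22_1 (Ft2 g) (Ft2 f)
  comm_tt22_2 : ∀ {b1 b2 c a1 a2 : X.C} (g : X.S.T2 b1 b2 c) (f : X.S.T2 a1 a2 b2),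
    Ft3 (X.S.tt22_2 g f) = Y.S.tt22_2 (Ft2 g) (Ft2 f)
  comm_tt32_1 : ∀ {b1 b2 b3 c a1 a2 : X.C} (g : X.S.T3 b1 b2 b3 c) (f : X.S.T2 a1 a2 b1),
    Ft4 (X.S.tt32_1 g f) = Y.S.tt32_1 (Ft3 g) (Ft2 f)
  comm_tt32_2 : ∀ {b1 b2 b3 c a1 a2 : X.C} (g : X.S.T3 b1 b2 b3 c) (f : X.S.T2 a1 a2 b2),
    Ft4 (X.S.tt32_2 g f) = Y.S.tt32_2 (Ft3 g) (Ft2 f)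
  comm_tt32_3 : ∀ {b1 b2 b3 c a1 a2 : X.C} (g : X.S.T3 b1 b2 b3 c) (f : X.S.T2 a1 a2 b3),
    Ft4 (X.S.tt32_3 g f) = Y.S.tt32_3 (Ft3 g) (Ft2 f)
  comm_tt23_1 : ∀ {b1 b2 c a1 a2 a3 : X.C} (g : X.S.T2 b1 b2 c) (f : X.S.T3 a1 a2 a3 b1),
    Ft4 (X.S.tt23_1 g f) = Y.S.tt23_1 (Ft2 g) (Ft3 f)
  comm_tt23_2 : ∀ {b1 b2 c a1 a2 a3 : X.C} (g : X.S.T2 b1 b2 c) (f : X.S.T3 a1 a2 a3 b2),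
    Ft4 (X.S.tt23_2 g f) = Y.S.tt23_2 (Ft2 g) (Ft3 f)
  comm_s20_1 : ∀ {b1 b2 c : X.C} (g : X.S.T2 b1 b2 c) (u : X.S.L0 b1),
    Fl1 (X.S.s20_1 g u) = Y.S.s20_1 (Ft2 g) (Fl0 u)
  comm_s20_2 : ∀ {b1 b2 c : X.C} (g : X.S.T2 b1 b2 c) (u : X.S.L0 b2),
    F.map (X.S.s20_2 g u) = Y.S.s20_2 (Ft2 g) (Fl0 u)
  comm_s30_1 : ∀ {b1 b2 b3 c : X.C} (g : X.S.T3 b1 b2 b3 c) (u : X.S.L0 b1),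
    Fl2 (X.S.s30_1 g u) = Y.S.s30_1 (Ft3 g) (Fl0 u)
  comm_s30_2 : ∀ {b1 b2 b3 c : X.C} (g : X.S.T3 b1 b2 b3 c) (u : X.S.L0 b2),
    Ft2 (X.S.s30_2 g u) = Y.S.s30_2 (Ft3 g) (Fl0 u)
  comm_s30_3 : ∀ {b1 b2 b3 c : X.C} (g : X.S.T3 b1 b2 b3 c) (u : X.S.L0 b3),
    Ft2 (X.S.s30_3 g u) = Y.S.s30_3 (Ft3 g) (Fl0 u)
  comm_sL10 : ∀ {b c : X.C} (q : X.S.L1 b c) (v : X.S.L0 b),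
    Fl0 (X.S.sL10 q v) = Y.S.sL10 (Fl1 q) (Fl0 v)
  comm_sl21_1 : ∀ {b1 b2 c a : X.C} (g : X.S.T2 b1 b2 c) (p : X.S.L1 a b1),
    Fl2 (X.S.sl21_1 g p) = Y.S.sl21_1 (Ft2 g) (Fl1 p)
  comm_sl21_2 : ∀ {b1 b2 c a : X.C} (g : X.S.T2 b1 b2 c) (p : X.S.L1 a b2),
    Ft2 (X.S.sl21_2 g p) = Y.S.sl21_2 (Ft2 g) (Fl1 p)
  comm_sl12 : ∀ {b c a1 a2 : X.C} (q : X.S.L1 b c) (g : X.S.T2 a1 a2 b),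
    Fl2 (X.S.sl12 q g) = Y.S.sl12 (Fl1 q) (Ft2 g)

/-- The category of short skew multicategories and their morphisms. -/
instance : Category.{max u v} ShortSkewMulticat.{u, v} where
  Hom := ShortSkewMultiHom
  id X :=
    { F := Functor.id X.C
      Ft2 := fun x => x, Ft3 := fun x => x, Ft4 := fun x => x
      Fl0 := fun x => x, Fl1 := fun x => x, Fl2 := fun x => x
      Ft2_nat := fun _ _ _ _ => rfl, Ft3_nat := fun _ _ _ _ _ => rfl
      Ft4_nat := fun _ _ _ _ _ _ => rfl, Fl0_nat := fun _ _ => rfl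
      Fl1_nat := fun _ _ _ => rfl, Fl2_nat := fun _ _ _ _ => rfl
      comm_j1 := fun _ => rfl, comm_j2 := fun _ => rfl
      comm_tt22_1 := fun _ _ => rfl, comm_tt22_2 := fun _ _ => rfl
      comm_tt32_1 := fun _ _ => rfl, comm_tt32_2 := fun _ _ => rfl
      comm_tt32_3 := fun _ _ => rfl, comm_tt23_1 := fun _ _ => rfl
      comm_tt23_2 := fun _ _ => rfl, comm_s20_1 := fun _ _ => rfl
      comm_s20_2 := fun _ _ => rfl, comm_s30_1 := fun _ _ => rfl
      comm_s30_2 := fun _ _ => rfl, comm_s30_3 := fun _ _ => rfl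
      comm_sL10 := fun _ _ => rfl, comm_sl21_1 := fun _ _ => rfl
      comm_sl21_2 := fun _ _ => rfl, comm_sl12 := fun _ _ => rfl }
  comp {X Y Z} f g :=
    { F := f.F ⋙ g.F
      Ft2 := fun x => g.Ft2 (f.Ft2 x), Ft3 := fun x => g.Ft3 (f.Ft3 x)
      Ft4 := fun x => g.Ft4 (f.Ft4 x), Fl0 := fun x => g.Fl0 (f.Fl0 x)
      Fl1 := fun x => g.Fl1 (f.Fl1 x), Fl2 := fun x => g.Fl2 (f.Fl2 x)
      Ft2_nat := by intros; (try dsimp only); rw [f.Ft2_nat, g.Ft2_nat]; rfl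
      Ft3_nat := by intros; (try dsimp only); rw [f.Ft3_nat, g.Ft3_nat]; rfl
      Ft4_nat := by intros; (try dsimp only); rw [f.Ft4_nat, g.Ft4_nat]; rfl
      Fl0_nat := by intros; (try dsimp only); rw [f.Fl0_nat, g.Fl0_nat]; rfl
      Fl1_nat := by intros; (try dsimp only); rw [f.Fl1_nat, g.Fl1_nat]; rfl
      Fl2_nat := by intros; (try dsimp only); rw [f.Fl2_nat, g.Fl2_nat]; rfl
      comm_j1 := by intros; (try dsimp only); rw [f.comm_j1, g.comm_j1]; rfl
      comm_j2 := by intros; (try dsimp only); rw [f.comm_j2, g.comm_j2]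
      comm_tt22_1 := by intros; (try dsimp only); rw [f.comm_tt22_1, g.comm_tt22_1]
      comm_tt22_2 := by intros; (try dsimp only); rw [f.comm_tt22_2, g.comm_tt22_2]
      comm_tt32_1 := by intros; (try dsimp only); rw [f.comm_tt32_1, g.comm_tt32_1]
      comm_tt32_2 := by intros; (try dsimp only); rw [f.comm_tt32_2, g.comm_tt32_2]
      comm_tt32_3 := by intros; (try dsimp only); rw [f.comm_tt32_3, g.comm_tt32_3]
      comm_tt23_1 := by intros; (try dsimp only); rw [f.comm_tt23_1, g.comm_tt23_1]
      comm_tt23_2 := by intros; (try dsimp only); rw [f.comm_tt23_2, g.comm_tt23_2]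
      comm_s20_1 := by intros; (try dsimp only); rw [f.comm_s20_1, g.comm_s20_1]
      comm_s20_2 := by
        intros; show g.F.map (f.F.map _) = _; rw [f.comm_s20_2, g.comm_s20_2]
      comm_s30_1 := by intros; (try dsimp only); rw [f.comm_s30_1, g.comm_s30_1]
      comm_s30_2 := by intros; (try dsimp only); rw [f.comm_s30_2, g.comm_s30_2]
      comm_s30_3 := by intros; (try dsimp only); rw [f.comm_s30_3, g.comm_s30_3]
      comm_sL10 := by intros; (try dsimp only); rw [f.comm_sL10, g.comm_sL10]
      comm_sl21_1 := by intros; (try dsimp only); rw [f.comm_sl21_1, g.comm_sl21_1]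
      comm_sl21_2 := by intros; (try dsimp only); rw [f.comm_sl21_2, g.comm_sl21_2]
      comm_sl12 := by intros; (try dsimp only); rw [f.comm_sl12, g.comm_sl12] }
  id_comp _ := rfl
  comp_id _ := rfl
  assoc _ _ _ := rfl

/-- The identity morphism of a short skew multicategory, as a standalone
definition. -/
def ShortSkewMultiHom.id' (X : ShortSkewMulticat.{u, v}) : ShortSkewMultiHom X X :=
  𝟙 X

/-- Composition of morphisms of short skew multicategories, as a standalone
definition. -/
def ShortSkewMultiHom.comp' {X Y Z : ShortSkewMulticat.{u, v}}
    (f : ShortSkewMultiHom X Y) (g : ShortSkewMultiHom Y Z) : ShortSkewMultiHom X Z :=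
  CategoryStruct.comp (X := X) (Y := Y) (Z := Z) f g
/-- A *short braiding* on a short skew multicategory: natural isomorphisms
`β³₂` (exchanging the last two inputs of tight ternary maps), `β⁴₂` (exchanging
the 2nd and 3rd inputs of tight 4-ary maps) and `β⁴₃` (exchanging the last two
inputs of tight 4-ary maps), subject to the braid relation
`β⁴₂β⁴₃β⁴₂ = β⁴₃β⁴₂β⁴₃` and the six compatibility axioms with substitution. -/
structure ShortBraiding {C : Type u} [Category.{v} C] (S : ShortSkewMultiStruct C) :
    Type (max u v) where
  b3 : ∀ {a1 a2 a3 b : C}, S.T3 a1 a2 a3 b → S.T3 a1 a3 a2 b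
  b42 : ∀ {a1 a2 a3 a4 b : C}, S.T4 a1 a2 a3 a4 b → S.T4 a1 a3 a2 a4 b
  b43 : ∀ {a1 a2 a3 a4 b : C}, S.T4 a1 a2 a3 a4 b → S.T4 a1 a2 a4 a3 b
  b3_bij : ∀ a1 a2 a3 b : C, Function.Bijective (fun x : S.T3 a1 a2 a3 b => b3 x)
  b42_bij : ∀ a1 a2 a3 a4 b : C, Function.Bijective (fun x : S.T4 a1 a2 a3 a4 b => b42 x)
  b43_bij : ∀ a1 a2 a3 a4 b : C, Function.Bijective (fun x : S.T4 a1 a2 a3 a4 b => b43 x)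
  b3_nat : ∀ {a1' a1 a2' a2 a3' a3 b b' : C} (p1 : a1' ⟶ a1) (p2 : a2' ⟶ a2)
    (p3 : a3' ⟶ a3) (q : b ⟶ b') (x : S.T3 a1 a2 a3 b),
    b3 (S.mapT3 p1 p2 p3 q x) = S.mapT3 p1 p3 p2 q (b3 x)
  b42_nat : ∀ {a1' a1 a2' a2 a3' a3 a4' a4 b b' : C} (p1 : a1' ⟶ a1) (p2 : a2' ⟶ a2)
    (p3 : a3' ⟶ a3) (p4 : a4' ⟶ a4) (q : b ⟶ b') (x : S.T4 a1 a2 a3 a4 b),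
    b42 (S.mapT4 p1 p2 p3 p4 q x) = S.mapT4 p1 p3 p2 p4 q (b42 x)
  b43_nat : ∀ {a1' a1 a2' a2 a3' a3 a4' a4 b b' : C} (p1 : a1' ⟶ a1) (p2 : a2' ⟶ a2)
    (p3 : a3' ⟶ a3) (p4 : a4' ⟶ a4) (q : b ⟶ b') (x : S.T4 a1 a2 a3 a4 b),
    b43 (S.mapT4 p1 p2 p3 p4 q x) = S.mapT4 p1 p2 p4 p3 q (b43 x)
  braid_rel : ∀ {a1 a2 a3 a4 b : C} (h : S.T4 a1 a2 a3 a4 b),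
    b42 (b43 (b42 h)) = b43 (b42 (b43 h))
  comp_bin_1 : ∀ {b1 b2 c a1 a2 a3 : C} (g : S.T2 b1 b2 c) (f : S.T3 a1 a2 a3 b1),
    S.tt23_1 g (b3 f) = b42 (S.tt23_1 g f)
  comp_bin_2 : ∀ {b1 b2 c a1 a2 a3 : C} (g : S.T2 b1 b2 c) (f : S.T3 a1 a2 a3 b2),
    S.tt23_2 g (b3 f) = b43 (S.tt23_2 g f)
  comp_ter_1 : ∀ {b1 b2 b3' c a1 a2 : C} (g : S.T3 b1 b2 b3' c) (f : S.T2 a1 a2 b1),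
    b43 (S.tt32_1 g f) = S.tt32_1 (b3 g) f
  comp_ter_2 : ∀ {b1 b2 b3' c a1 a2 : C} (g : S.T3 b1 b2 b3' c) (f : S.T2 a1 a2 b2),
    b42 (b43 (S.tt32_2 g f)) = S.tt32_3 (b3 g) f
  comp_ter_3 : ∀ {b1 b2 b3' c a1 a2 : C} (g : S.T3 b1 b2 b3' c) (f : S.T2 a1 a2 b3'),
    b43 (b42 (S.tt32_3 g f)) = S.tt32_2 (b3 g) f

namespace ShortBraiding

variable {C : Type u} [Category.{v} C] {S : ShortSkewMultiStruct C}

/-- A short braiding is a *short symmetry* when `β³₂ ∘ β³₂ = id`. -/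
def IsSymmetry (β : ShortBraiding S) : Prop :=
  ∀ {a1 a2 a3 b : C} (x : S.T3 a1 a2 a3 b), β.b3 (β.b3 x) = x

end ShortBraiding

/-- A braided short skew multicategory. -/
structure BrdShortSkewMulticat : Type (max (u + 1) (v + 1)) where
  X : ShortSkewMulticat.{u, v}
  β : ShortBraiding X.S

/-- A morphism of short skew multicategories is *braided* when it commutes with
the braiding isomorphisms `β³₂`, `β⁴₂` and `β⁴₃`. -/
def IsBraidedHom {X Y : ShortSkewMulticat.{u, v}} (βX : ShortBraiding X.S)
    (βY : ShortBraiding Y.S) (F : ShortSkewMultiHom X Y) : Prop :=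
  (∀ {a1 a2 a3 b : X.C} (x : X.S.T3 a1 a2 a3 b), F.Ft3 (βX.b3 x) = βY.b3 (F.Ft3 x)) ∧
  (∀ {a1 a2 a3 a4 b : X.C} (x : X.S.T4 a1 a2 a3 a4 b),
    F.Ft4 (βX.b42 x) = βY.b42 (F.Ft4 x)) ∧
  (∀ {a1 a2 a3 a4 b : X.C} (x : X.S.T4 a1 a2 a3 a4 b),
    F.Ft4 (βX.b43 x) = βY.b43 (F.Ft4 x))

theorem IsBraidedHom.id (X : ShortSkewMulticat.{u, v}) (β : ShortBraiding X.S) :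
    IsBraidedHom β β (𝟙 X) :=
  ⟨fun _ => rfl, fun _ => rfl, fun _ => rfl⟩

theorem IsBraidedHom.comp {X Y Z : ShortSkewMulticat.{u, v}} {βX : ShortBraiding X.S}
    {βY : ShortBraiding Y.S} {βZ : ShortBraiding Z.S} {F : X ⟶ Y} {G : Y ⟶ Z}
    (hF : IsBraidedHom βX βY F) (hG : IsBraidedHom βY βZ G) :
    IsBraidedHom βX βZ (F ≫ G) := by
  refine ⟨fun x => ?_, fun x => ?_, fun x => ?_⟩
  · show G.Ft3 (F.Ft3 (βX.b3 x)) = βZ.b3 (G.Ft3 (F.Ft3 x))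
    rw [hF.1, hG.1]
  · show G.Ft4 (F.Ft4 (βX.b42 x)) = βZ.b42 (G.Ft4 (F.Ft4 x))
    rw [hF.2.1, hG.2.1]
  · show G.Ft4 (F.Ft4 (βX.b43 x)) = βZ.b43 (G.Ft4 (F.Ft4 x))
    rw [hF.2.2, hG.2.2]

/-- The category of braided short skew multicategories and braided morphisms. -/
instance : Category.{max u v} BrdShortSkewMulticat.{u, v} where
  Hom X Y := { F : ShortSkewMultiHom X.X Y.X // IsBraidedHom X.β Y.β F }
  id X := Subtype.mk (ShortSkewMultiHom.id' X.X) (IsBraidedHom.id X.X X.β)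
  comp {X Y Z} f g :=
    Subtype.mk (ShortSkewMultiHom.comp' f.1 g.1) (IsBraidedHom.comp f.2 g.2)
  id_comp {X Y} f := by
    apply Subtype.ext
    show ShortSkewMultiHom.comp' (ShortSkewMultiHom.id' X.X) f.1 = f.1
    show 𝟙 X.X ≫ f.1 = f.1
    simp
  comp_id {X Y} f := by
    apply Subtype.ext
    show ShortSkewMultiHom.comp' f.1 (ShortSkewMultiHom.id' Y.X) = f.1
    show f.1 ≫ 𝟙 Y.X = f.1
    simp
  assoc {W X Y Z} f g h := by
    apply Subtype.ext
    show ShortSkewMultiHom.comp' (ShortSkewMultiHom.comp' f.1 g.1) h.1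
      = ShortSkewMultiHom.comp' f.1 (ShortSkewMultiHom.comp' g.1 h.1)
    rfl
/-- A (left) skew monoidal structure on a category `C` (Szlachányi): a tensor
product, a unit, and natural families `α, λ, ρ` (not required to be invertible)
satisfying the five skew monoidal axioms. -/
structure SkewMonStruct (C : Type u) [Category.{v} C] where
  tensor : C → C → C
  tensorHom : ∀ {a b c d : C}, (a ⟶ b) → (c ⟶ d) → (tensor a c ⟶ tensor b d)
  tensorHom_id : ∀ a b : C, tensorHom (𝟙 a) (𝟙 b) = 𝟙 (tensor a b)
  tensorHom_comp : ∀ {a b c x y z : C} (f : a ⟶ b) (g : b ⟶ c) (h : x ⟶ y) (k : y ⟶ z),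
    tensorHom (f ≫ g) (h ≫ k) = tensorHom f h ≫ tensorHom g k
  unit : C
  α : ∀ a b c : C, tensor (tensor a b) c ⟶ tensor a (tensor b c)
  lam : ∀ a : C, tensor unit a ⟶ a
  rho : ∀ a : C, a ⟶ tensor a unit
  α_nat : ∀ {a a' b b' c c' : C} (f : a ⟶ a') (g : b ⟶ b') (h : c ⟶ c'),
    tensorHom (tensorHom f g) h ≫ α a' b' c' = α a b c ≫ tensorHom f (tensorHom g h)
  lam_nat : ∀ {a a' : C} (f : a ⟶ a'), tensorHom (𝟙 unit) f ≫ lam a' = lam a ≫ f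
  rho_nat : ∀ {a a' : C} (f : a ⟶ a'), f ≫ rho a' = rho a ≫ tensorHom f (𝟙 unit)
  pentagon : ∀ a b c d : C,
    tensorHom (α a b c) (𝟙 d) ≫ α a (tensor b c) d ≫ tensorHom (𝟙 a) (α b c d)
      = α (tensor a b) c d ≫ α a b (tensor c d)
  lam_tensor : ∀ a b : C, α unit a b ≫ lam (tensor a b) = tensorHom (lam a) (𝟙 b)
  rho_tensor : ∀ a b : C, rho (tensor a b) ≫ α a b unit = tensorHom (𝟙 a) (rho b)
  middle : ∀ a b : C,
    tensorHom (rho a) (𝟙 b) ≫ α a unit b ≫ tensorHom (𝟙 a) (lam b) = 𝟙 (tensor a b)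
  lam_rho : rho unit ≫ lam unit = 𝟙 unit

namespace SkewMonStruct

variable {C : Type u} [Category.{v} C] (E : SkewMonStruct C)

/-- A skew monoidal category is *left normal* when `λ` is invertible. -/
def LeftNormal : Prop := ∀ a : C, IsIso (E.lam a)

/-- A skew monoidal category is *monoidal* when `α`, `λ` and `ρ` are all
invertible. -/
def IsMonoidal : Prop :=
  (∀ a b c : C, IsIso (E.α a b c)) ∧ (∀ a : C, IsIso (E.lam a)) ∧ (∀ a : C, IsIso (E.rho a))

/-- The endofunctor `- ⊗ b`. -/
def tensorRight (b : C) : C ⥤ C where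
  obj a := E.tensor a b
  map f := E.tensorHom f (𝟙 b)
  map_id _ := E.tensorHom_id _ _
  map_comp f g := by rw [← E.tensorHom_comp]; simp

/-- A skew monoidal category is *(left) closed* when every endofunctor `- ⊗ b`
has a right adjoint `[b,-]`. -/
def ClosedSk : Prop := ∀ b : C, ∃ R : C ⥤ C, Nonempty (E.tensorRight b ⊣ R)

end SkewMonStruct

/-- A bundled skew monoidal category. -/
structure SkewMonCat : Type (max (u + 1) (v + 1)) where
  C : Type u
  [inst : Category.{v} C]
  S : SkewMonStruct C

attribute [instance] SkewMonCat.inst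

/-- A lax monoidal functor between skew monoidal categories. -/
structure SkewMonHom (X Y : SkewMonCat.{u, v}) : Type (max u v) where
  F : X.C ⥤ Y.C
  f0 : Y.S.unit ⟶ F.obj X.S.unit
  f2 : ∀ a b : X.C, Y.S.tensor (F.obj a) (F.obj b) ⟶ F.obj (X.S.tensor a b)
  f2_nat : ∀ {a a' b b' : X.C} (f : a ⟶ a') (g : b ⟶ b'),
    Y.S.tensorHom (F.map f) (F.map g) ≫ f2 a' b' = f2 a b ≫ F.map (X.S.tensorHom f g)
  assoc : ∀ a b c : X.C,
    Y.S.tensorHom (f2 a b) (𝟙 (F.obj c)) ≫ f2 (X.S.tensor a b) c ≫ F.map (X.S.α a b c)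
      = Y.S.α (F.obj a) (F.obj b) (F.obj c) ≫
          Y.S.tensorHom (𝟙 (F.obj a)) (f2 b c) ≫ f2 a (X.S.tensor b c)
  left_unit : ∀ a : X.C,
    Y.S.lam (F.obj a)
      = Y.S.tensorHom f0 (𝟙 (F.obj a)) ≫ f2 X.S.unit a ≫ F.map (X.S.lam a)
  right_unit : ∀ a : X.C,
    Y.S.rho (F.obj a) ≫ Y.S.tensorHom (𝟙 (F.obj a)) f0 ≫ f2 a X.S.unit
      = F.map (X.S.rho a)

theorem SkewMonHom.ext' {X Y : SkewMonCat.{u, v}} {f g : SkewMonHom X Y}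
    (hF : f.F = g.F) (h0 : HEq f.f0 g.f0) (h2 : HEq f.f2 g.f2) : f = g := by
  obtain ⟨F, f0, f2, _, _, _, _⟩ := f
  obtain ⟨G, g0, g2, _, _, _, _⟩ := g
  cases hF; cases h0; cases h2; rfl

/-- The identity lax monoidal functor. -/
def SkewMonHom.id (X : SkewMonCat.{u, v}) : SkewMonHom X X where
  F := Functor.id X.C
  f0 := 𝟙 X.S.unit
  f2 := fun a b => 𝟙 (X.S.tensor a b)
  f2_nat := by intros; simp
  assoc := by intro a b c; simp [X.S.tensorHom_id]
  left_unit := by intro a; simp [X.S.tensorHom_id]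
  right_unit := by intro a; simp [X.S.tensorHom_id]

/-- Composition of lax monoidal functors. -/
def SkewMonHom.comp {X Y Z : SkewMonCat.{u, v}} (f : SkewMonHom X Y) (g : SkewMonHom Y Z) :
    SkewMonHom X Z where
  F := f.F ⋙ g.F
  f0 := g.f0 ≫ g.F.map f.f0
  f2 := fun a b => g.f2 (f.F.obj a) (f.F.obj b) ≫ g.F.map (f.f2 a b)
  f2_nat := by
    intro a a' b b' p q
    show Z.S.tensorHom (g.F.map (f.F.map p)) (g.F.map (f.F.map q)) ≫ _ ≫ _
      = (_ ≫ _) ≫ g.F.map (f.F.map (X.S.tensorHom p q))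
    rw [← Category.assoc, g.f2_nat (f.F.map p) (f.F.map q), Category.assoc,
      ← g.F.map_comp, f.f2_nat p q, g.F.map_comp, Category.assoc]
  assoc := by
    intro a b c
    have gnatR : ∀ {p q : Y.C} (φ : p ⟶ q) (r : Y.C),
        Z.S.tensorHom (g.F.map φ) (𝟙 (g.F.obj r)) ≫ g.f2 q r
          = g.f2 p r ≫ g.F.map (Y.S.tensorHom φ (𝟙 r)) := by
      intro p q φ r
      have h := g.f2_nat φ (𝟙 r); rw [g.F.map_id] at h; exact h
    have gnatL : ∀ (r : Y.C) {p q : Y.C} (φ : p ⟶ q),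
        Z.S.tensorHom (𝟙 (g.F.obj r)) (g.F.map φ) ≫ g.f2 r q
          = g.f2 r p ≫ g.F.map (Y.S.tensorHom (𝟙 r) φ) := by
      intro r p q φ
      have h := g.f2_nat (𝟙 r) φ; rw [g.F.map_id] at h; exact h
    show Z.S.tensorHom (g.f2 _ _ ≫ g.F.map (f.f2 a b)) (𝟙 _) ≫
        (g.f2 _ _ ≫ g.F.map (f.f2 _ c)) ≫ g.F.map (f.F.map (X.S.α a b c))
      = Z.S.α _ _ _ ≫ Z.S.tensorHom (𝟙 _) (g.f2 _ _ ≫ g.F.map (f.f2 b c)) ≫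
          g.f2 _ _ ≫ g.F.map (f.f2 a _)
    have h1 : Z.S.tensorHom
        (g.f2 (f.F.obj a) (f.F.obj b) ≫ g.F.map (f.f2 a b)) (𝟙 (g.F.obj (f.F.obj c)))
        = Z.S.tensorHom (g.f2 (f.F.obj a) (f.F.obj b)) (𝟙 (g.F.obj (f.F.obj c))) ≫
            Z.S.tensorHom (g.F.map (f.f2 a b)) (𝟙 (g.F.obj (f.F.obj c))) := by
      rw [← Z.S.tensorHom_comp]; simp
    have h2 : Z.S.tensorHom (𝟙 (g.F.obj (f.F.obj a)))
        (g.f2 (f.F.obj b) (f.F.obj c) ≫ g.F.map (f.f2 b c))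
        = Z.S.tensorHom (𝟙 (g.F.obj (f.F.obj a))) (g.f2 (f.F.obj b) (f.F.obj c)) ≫
            Z.S.tensorHom (𝟙 (g.F.obj (f.F.obj a))) (g.F.map (f.f2 b c)) := by
      rw [← Z.S.tensorHom_comp]; simp
    rw [h1, h2]
    simp only [Category.assoc]
    slice_lhs 2 3 => rw [gnatR (f.f2 a b) (f.F.obj c)]
    simp only [Category.assoc]
    slice_lhs 3 5 => rw [← g.F.map_comp, ← g.F.map_comp, f.assoc a b c]
    simp only [Functor.map_comp, Category.assoc]
    slice_lhs 1 3 => rw [g.assoc (f.F.obj a) (f.F.obj b) (f.F.obj c)]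
    simp only [Category.assoc]
    slice_lhs 3 4 => rw [← gnatL (f.F.obj a) (f.f2 b c)]
    simp only [Category.assoc]
  left_unit := by
    intro a
    have gnatR : ∀ {p q : Y.C} (φ : p ⟶ q) (r : Y.C),
        Z.S.tensorHom (g.F.map φ) (𝟙 (g.F.obj r)) ≫ g.f2 q r
          = g.f2 p r ≫ g.F.map (Y.S.tensorHom φ (𝟙 r)) := by
      intro p q φ r
      have h := g.f2_nat φ (𝟙 r); rw [g.F.map_id] at h; exact h
    show Z.S.lam (g.F.obj (f.F.obj a))
      = Z.S.tensorHom (g.f0 ≫ g.F.map f.f0) (𝟙 _) ≫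
          (g.f2 _ _ ≫ g.F.map (f.f2 X.S.unit a)) ≫ g.F.map (f.F.map (X.S.lam a))
    have h1 : Z.S.tensorHom (g.f0 ≫ g.F.map f.f0) (𝟙 (g.F.obj (f.F.obj a)))
        = Z.S.tensorHom g.f0 (𝟙 (g.F.obj (f.F.obj a))) ≫
            Z.S.tensorHom (g.F.map f.f0) (𝟙 (g.F.obj (f.F.obj a))) := by
      rw [← Z.S.tensorHom_comp]; simp
    rw [h1]
    simp only [Category.assoc]
    slice_rhs 2 3 => rw [gnatR f.f0 (f.F.obj a)]
    simp only [Category.assoc]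
    slice_rhs 3 5 => rw [← g.F.map_comp, ← g.F.map_comp, ← f.left_unit a]
    exact g.left_unit (f.F.obj a)
  right_unit := by
    intro a
    have gnatL : ∀ (r : Y.C) {p q : Y.C} (φ : p ⟶ q),
        Z.S.tensorHom (𝟙 (g.F.obj r)) (g.F.map φ) ≫ g.f2 r q
          = g.f2 r p ≫ g.F.map (Y.S.tensorHom (𝟙 r) φ) := by
      intro r p q φ
      have h := g.f2_nat (𝟙 r) φ; rw [g.F.map_id] at h; exact h
    show Z.S.rho (g.F.obj (f.F.obj a)) ≫
        Z.S.tensorHom (𝟙 _) (g.f0 ≫ g.F.map f.f0) ≫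
        (g.f2 _ _ ≫ g.F.map (f.f2 a X.S.unit))
      = g.F.map (f.F.map (X.S.rho a))
    have h1 : Z.S.tensorHom (𝟙 (g.F.obj (f.F.obj a))) (g.f0 ≫ g.F.map f.f0)
        = Z.S.tensorHom (𝟙 (g.F.obj (f.F.obj a))) g.f0 ≫
            Z.S.tensorHom (𝟙 (g.F.obj (f.F.obj a))) (g.F.map f.f0) := by
      rw [← Z.S.tensorHom_comp]; simp
    rw [h1]
    simp only [Category.assoc]
    slice_lhs 3 4 => rw [gnatL (f.F.obj a) f.f0]
    simp only [Category.assoc]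
    slice_lhs 1 3 => rw [g.right_unit (f.F.obj a)]
    simp only [Category.assoc]
    rw [← g.F.map_comp, ← g.F.map_comp, f.right_unit a]

theorem SkewMonHom.id_comp' {X Y : SkewMonCat.{u, v}} (f : SkewMonHom X Y) :
    (SkewMonHom.id X).comp f = f := by
  refine SkewMonHom.ext' rfl (heq_of_eq ?_) (heq_of_eq ?_)
  · show f.f0 ≫ f.F.map (𝟙 _) = f.f0; simp
  · funext a b; show f.f2 a b ≫ f.F.map (𝟙 _) = f.f2 a b; simp

theorem SkewMonHom.comp_id' {X Y : SkewMonCat.{u, v}} (f : SkewMonHom X Y) :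
    f.comp (SkewMonHom.id Y) = f := by
  refine SkewMonHom.ext' rfl (heq_of_eq ?_) (heq_of_eq ?_)
  · show 𝟙 _ ≫ f.f0 = f.f0; simp
  · funext a b; show 𝟙 _ ≫ f.f2 a b = f.f2 a b; simp

theorem SkewMonHom.comp_assoc' {W X Y Z : SkewMonCat.{u, v}} (f : SkewMonHom W X)
    (g : SkewMonHom X Y) (h : SkewMonHom Y Z) :
    (f.comp g).comp h = f.comp (g.comp h) := by
  refine SkewMonHom.ext' rfl (heq_of_eq ?_) (heq_of_eq ?_)
  · show h.f0 ≫ h.F.map (g.f0 ≫ g.F.map f.f0)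
      = (h.f0 ≫ h.F.map g.f0) ≫ h.F.map (g.F.map f.f0)
    simp
  · funext a b
    show h.f2 _ _ ≫ h.F.map (g.f2 _ _ ≫ g.F.map (f.f2 a b))
      = (h.f2 _ _ ≫ h.F.map (g.f2 _ _)) ≫ h.F.map (g.F.map (f.f2 a b))
    simp

/-- The category of skew monoidal categories and lax monoidal functors. -/
instance : Category.{max u v} SkewMonCat.{u, v} where
  Hom := SkewMonHom
  id := SkewMonHom.id
  comp := SkewMonHom.comp
  id_comp := SkewMonHom.id_comp'
  comp_id := SkewMonHom.comp_id'
  assoc := SkewMonHom.comp_assoc'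
/-- The data exhibiting a skew monoidal structure `E` on `C` as *built from
left universal map classifiers* of a short skew multicategory structure `S` on
`C`: the tensor is the tight binary map classifier, the unit is the nullary map
classifier, and the tensor of morphisms, associator and unit maps are
determined by the classifier equations (`λ_a ∘ (θ_{i,a} ∘₁ u) = j(1_a)`,
`ρ_a = θ_{a,i} ∘₂ u`, `α ∘ (θ_{ab,c} ∘₁ θ_{a,b}) = θ_{a,bc} ∘₂ θ_{b,c}`). -/
structure KDataS {C : Type u} [Category.{v} C] (S : ShortSkewMultiStruct C)
    (E : SkewMonStruct C) where
  θ : ∀ a b : C, S.T2 a b (E.tensor a b)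
  u : S.L0 E.unit
  θ_lu : ∀ a b : C, S.IsLeftUniversalBin (θ a b)
  u_lu : S.IsLeftUniversalNul u
  tensorHom_eq : ∀ {a b c d : C} (f : a ⟶ b) (g : c ⟶ d),
    S.mapT2 (𝟙 a) (𝟙 c) (E.tensorHom f g) (θ a c) = S.mapT2 f g (𝟙 (E.tensor b d)) (θ b d)
  α_eq : ∀ a b c : C,
    S.mapT3 (𝟙 a) (𝟙 b) (𝟙 c) (E.α a b c) (S.tt22_1 (θ (E.tensor a b) c) (θ a b))
      = S.tt22_2 (θ a (E.tensor b c)) (θ b c)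
  lam_eq : ∀ a : C,
    S.mapL1 (𝟙 a) (E.lam a) (S.s20_1 (θ E.unit a) u) = S.j1 (𝟙 a)
  rho_eq : ∀ a : C, E.rho a = S.s20_2 (θ a E.unit) u


/-!
By left universality, `θ₃ = θ_{xa,b} ∘₁ θ_{x,a}` classifies tight ternary maps out of `x, a, b`
and `θ₃ ∘₁ θ_{x,a}` classifies tight 4-ary maps out of `x, a, b, c`, so equations between
morphisms out of `(xa)b` or `((xa)b)c` can be checked on these universal multimaps. There `s`
acts as `β³₂`, `s·c` and `s_{xa,b,c}` act as `β⁴₂` and `β⁴₃`, and `α` acts through the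
associativity and interchange equations; each braiding axiom then becomes the braid relation or
one of the compatibilities of `β` with substitution. Finally `s` is invertible because `β³₂` is,
and it is a symmetry when `β³₂` is an involution.
-/

namespace ShortSkewMultiStruct

variable {C : Type u} [Category.{v} C] (S : ShortSkewMultiStruct C)

def postT3 {a1 a2 a3 b b' : C} (q : b ⟶ b') (M : S.T3 a1 a2 a3 b) : S.T3 a1 a2 a3 b' :=
  S.mapT3 (𝟙 a1) (𝟙 a2) (𝟙 a3) q M

def postT4 {a1 a2 a3 a4 b b' : C} (q : b ⟶ b') (M : S.T4 a1 a2 a3 a4 b) :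
    S.T4 a1 a2 a3 a4 b' :=
  S.mapT4 (𝟙 a1) (𝟙 a2) (𝟙 a3) (𝟙 a4) q M

lemma postT3_id {a1 a2 a3 b : C} (M : S.T3 a1 a2 a3 b) : S.postT3 (𝟙 b) M = M :=
  S.mapT3_id M

lemma postT3_comp {a1 a2 a3 b b' b'' : C} (p : b ⟶ b') (q : b' ⟶ b'')
    (M : S.T3 a1 a2 a3 b) : S.postT3 (p ≫ q) M = S.postT3 q (S.postT3 p M) := by
  simp only [postT3, S.mapT3_comp, Category.id_comp]

lemma postT4_comp {a1 a2 a3 a4 b b' b'' : C} (p : b ⟶ b') (q : b' ⟶ b'')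
    (M : S.T4 a1 a2 a3 a4 b) : S.postT4 (p ≫ q) M = S.postT4 q (S.postT4 p M) := by
  simp only [postT4, S.mapT4_comp, Category.id_comp]

lemma postT3_tt22_1 {a1 a2 b1 b2 c c' : C} (r : c ⟶ c') (g : S.T2 b1 b2 c)
    (f : S.T2 a1 a2 b1) :
    S.postT3 r (S.tt22_1 g f) = S.tt22_1 (S.mapT2 (𝟙 b1) (𝟙 b2) r g) f := by
  rw [postT3, S.tt22_1_nat, S.mapT2_id]

lemma postT4_tt32_1 {a1 a2 b1 b2 b3 c c' : C} (r : c ⟶ c') (g : S.T3 b1 b2 b3 c)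
    (f : S.T2 a1 a2 b1) : S.postT4 r (S.tt32_1 g f) = S.tt32_1 (S.postT3 r g) f := by
  rw [postT4, S.tt32_1_nat, S.mapT2_id, postT3]

lemma postT4_tt32_2 {a1 a2 b1 b2 b3 c c' : C} (r : c ⟶ c') (g : S.T3 b1 b2 b3 c)
    (f : S.T2 a1 a2 b2) : S.postT4 r (S.tt32_2 g f) = S.tt32_2 (S.postT3 r g) f := by
  rw [postT4, S.tt32_2_nat, S.mapT2_id, postT3]

lemma postT4_tt32_3 {a1 a2 b1 b2 b3 c c' : C} (r : c ⟶ c') (g : S.T3 b1 b2 b3 c)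
    (f : S.T2 a1 a2 b3) : S.postT4 r (S.tt32_3 g f) = S.tt32_3 (S.postT3 r g) f := by
  rw [postT4, S.tt32_3_nat, S.mapT2_id, postT3]

lemma postT4_tt23_1 {a1 a2 a3 b1 b2 c c' : C} (r : c ⟶ c') (g : S.T2 b1 b2 c)
    (f : S.T3 a1 a2 a3 b1) :
    S.postT4 r (S.tt23_1 g f) = S.tt23_1 (S.mapT2 (𝟙 b1) (𝟙 b2) r g) f := by
  rw [postT4, S.tt23_1_nat, S.mapT3_id]

lemma postT4_tt23_2 {a1 a2 a3 b1 b2 c c' : C} (r : c ⟶ c') (g : S.T2 b1 b2 c)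
    (f : S.T3 a1 a2 a3 b2) :
    S.postT4 r (S.tt23_2 g f) = S.tt23_2 (S.mapT2 (𝟙 b1) (𝟙 b2) r g) f := by
  rw [postT4, S.tt23_2_nat, S.mapT3_id]

end ShortSkewMultiStruct

namespace ShortBraiding

variable {C : Type u} [Category.{v} C] {S : ShortSkewMultiStruct C} (β : ShortBraiding S)

lemma b3_postT3 {a1 a2 a3 b b' : C} (q : b ⟶ b') (M : S.T3 a1 a2 a3 b) :
    β.b3 (S.postT3 q M) = S.postT3 q (β.b3 M) :=
  β.b3_nat _ _ _ q M

lemma b42_postT4 {a1 a2 a3 a4 b b' : C} (q : b ⟶ b') (M : S.T4 a1 a2 a3 a4 b) :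
    β.b42 (S.postT4 q M) = S.postT4 q (β.b42 M) :=
  β.b42_nat _ _ _ _ q M

lemma b43_postT4 {a1 a2 a3 a4 b b' : C} (q : b ⟶ b') (M : S.T4 a1 a2 a3 a4 b) :
    β.b43 (S.postT4 q M) = S.postT4 q (β.b43 M) :=
  β.b43_nat _ _ _ _ q M

end ShortBraiding

namespace KDataS

variable {C : Type u} [Category.{v} C] {S : ShortSkewMultiStruct C} {E : SkewMonStruct C}
  (D : KDataS S E)

def θ3 (x a b : C) : S.T3 x a b (E.tensor (E.tensor x a) b) :=
  S.tt22_1 (D.θ (E.tensor x a) b) (D.θ x a)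

def θ4 (x a b c : C) : S.T4 x a b c (E.tensor (E.tensor (E.tensor x a) b) c) :=
  S.tt32_1 (D.θ3 (E.tensor x a) b c) (D.θ x a)

lemma θ4_eq_tt23_1 (x a b c : C) :
    D.θ4 x a b c = S.tt23_1 (D.θ (E.tensor (E.tensor x a) b) c) (D.θ3 x a b) :=
  (S.assoc_a_11 _ _ _).symm

lemma postT3_θ3_bijective (x a b e : C) :
    Function.Bijective (fun p : E.tensor (E.tensor x a) b ⟶ e => S.postT3 p (D.θ3 x a b)) := by
  have hcomp : (fun p : E.tensor (E.tensor x a) b ⟶ e => S.postT3 p (D.θ3 x a b))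
      = (fun g : S.T2 (E.tensor x a) b e => S.tt22_1 g (D.θ x a)) ∘
          (fun p => S.mapT2 (𝟙 (E.tensor x a)) (𝟙 b) p (D.θ (E.tensor x a) b)) :=
    funext fun p => S.postT3_tt22_1 p _ _
  rw [hcomp]
  exact ((D.θ_lu x a).2.1 b e).comp ((D.θ_lu (E.tensor x a) b).1 e)

lemma hom_ext3 {x a b e : C} {p q : E.tensor (E.tensor x a) b ⟶ e}
    (h : S.postT3 p (D.θ3 x a b) = S.postT3 q (D.θ3 x a b)) : p = q :=
  (D.postT3_θ3_bijective x a b e).injective h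

lemma hom_ext4 {x a b c e : C} {p q : E.tensor (E.tensor (E.tensor x a) b) c ⟶ e}
    (h : S.postT4 p (D.θ4 x a b c) = S.postT4 q (D.θ4 x a b c)) : p = q := by
  rw [θ4, S.postT4_tt32_1, S.postT4_tt32_1] at h
  exact D.hom_ext3 (((D.θ_lu x a).2.2 b c e).injective h)

lemma postT4_tensorHom_tt23_1 {x a b e e' : C} (f : e ⟶ e') (c : C) (M : S.T3 x a b e) :
    S.postT4 (E.tensorHom f (𝟙 c)) (S.tt23_1 (D.θ e c) M)
      = S.tt23_1 (D.θ e' c) (S.postT3 f M) := by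
  rw [S.postT4_tt23_1, D.tensorHom_eq f (𝟙 c), S.tt23_1_dinat]
  rfl

lemma postT4_tensorHom_tt23_2 {a b c e e' : C} (x : C) (f : e ⟶ e') (M : S.T3 a b c e) :
    S.postT4 (E.tensorHom (𝟙 x) f) (S.tt23_2 (D.θ x e) M)
      = S.tt23_2 (D.θ x e') (S.postT3 f M) := by
  rw [S.postT4_tt23_2, D.tensorHom_eq (𝟙 x) f, S.tt23_2_dinat]
  rfl

lemma postT3_α_θ3 (x a b : C) :
    S.postT3 (E.α x a b) (D.θ3 x a b) = S.tt22_2 (D.θ x (E.tensor a b)) (D.θ a b) :=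
  D.α_eq x a b

lemma postT4_tensorHom_α_θ4 (x a b c : C) :
    S.postT4 (E.tensorHom (E.α x a b) (𝟙 c)) (D.θ4 x a b c)
      = S.tt32_2 (D.θ3 x (E.tensor a b) c) (D.θ a b) := by
  rw [θ4_eq_tt23_1, postT4_tensorHom_tt23_1, postT3_α_θ3, S.assoc_a_12, θ3]

lemma postT4_α_θ4 (x a b c : C) :
    S.postT4 (E.α (E.tensor x a) b c) (D.θ4 x a b c)
      = S.tt32_3 (D.θ3 x a (E.tensor b c)) (D.θ b c) := by
  rw [θ4, S.postT4_tt32_1, postT3_α_θ3, ← S.inter_a, θ3]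

lemma postT4_α_tt32_2 (x a b c : C) :
    S.postT4 (E.α x (E.tensor a b) c) (S.tt32_2 (D.θ3 x (E.tensor a b) c) (D.θ a b))
      = S.tt23_2 (D.θ x (E.tensor (E.tensor a b) c)) (D.θ3 a b c) := by
  rw [S.postT4_tt32_2, postT3_α_θ3, ← S.assoc_a_21, θ3]

def IsInducedBraiding (β : ShortBraiding S)
    (s : ∀ x a b : C, E.tensor (E.tensor x a) b ⟶ E.tensor (E.tensor x b) a) : Prop :=
  ∀ x a b : C, S.postT3 (s x a b) (D.θ3 x a b) = β.b3 (D.θ3 x b a)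

namespace IsInducedBraiding

variable {D} {β : ShortBraiding S}
  {s : ∀ x a b : C, E.tensor (E.tensor x a) b ⟶ E.tensor (E.tensor x b) a}

lemma postT4_θ4 (hs : D.IsInducedBraiding β s) (x a b c : C) :
    S.postT4 (s (E.tensor x a) b c) (D.θ4 x a b c) = β.b43 (D.θ4 x a c b) := by
  rw [θ4, θ4, S.postT4_tt32_1, hs, β.comp_ter_1]

lemma postT4_tensorHom_θ4 (hs : D.IsInducedBraiding β s) (x a b c : C) :
    S.postT4 (E.tensorHom (s x a b) (𝟙 c)) (D.θ4 x a b c) = β.b42 (D.θ4 x b a c) := by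
  rw [θ4_eq_tt23_1, θ4_eq_tt23_1, postT4_tensorHom_tt23_1, hs, β.comp_bin_1]

lemma isIso (hs : D.IsInducedBraiding β s) (x a b : C) : IsIso (s x a b) := by
  refine isIso_of_coyoneda_map_bijective _ fun e => ?_
  have hcomp : (fun p : E.tensor (E.tensor x a) b ⟶ e => S.postT3 p (D.θ3 x a b)) ∘
      (fun p => s x a b ≫ p) = β.b3 ∘ (fun p => S.postT3 p (D.θ3 x b a)) := by
    funext p
    simp only [Function.comp_apply, S.postT3_comp, hs x a b, β.b3_postT3]
  rw [← (D.postT3_θ3_bijective x a b e).of_comp_iff', hcomp]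
  exact (β.b3_bij x b a e).comp (D.postT3_θ3_bijective x b a e)

lemma yangBaxter (hs : D.IsInducedBraiding β s) (x a b c : C) :
    s (E.tensor x a) b c ≫ E.tensorHom (s x a c) (𝟙 b) ≫ s (E.tensor x c) a b
      = E.tensorHom (s x a b) (𝟙 c) ≫ s (E.tensor x b) a c ≫
          E.tensorHom (s x b c) (𝟙 a) := by
  refine D.hom_ext4 ?_
  simp only [S.postT4_comp, hs.postT4_θ4, hs.postT4_tensorHom_θ4, ← β.b42_postT4,
    ← β.b43_postT4]
  exact (β.braid_rel _).symm

lemma hexagon_right (hs : D.IsInducedBraiding β s) (x a b c : C) :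
    E.tensorHom (s x a b) (𝟙 c) ≫ s (E.tensor x b) a c ≫ E.tensorHom (E.α x b c) (𝟙 a)
      = E.α (E.tensor x a) b c ≫ s x a (E.tensor b c) := by
  refine D.hom_ext4 ?_
  simp only [S.postT4_comp]
  rw [hs.postT4_tensorHom_θ4, ← β.b42_postT4, hs.postT4_θ4, ← β.b42_postT4,
    ← β.b43_postT4, postT4_tensorHom_α_θ4, postT4_α_θ4, S.postT4_tt32_3, hs,
    ← β.comp_ter_2]

lemma hexagon_left (hs : D.IsInducedBraiding β s) (x a b c : C) :
    s (E.tensor x a) b c ≫ E.tensorHom (s x a c) (𝟙 b) ≫ E.α (E.tensor x c) a b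
      = E.tensorHom (E.α x a b) (𝟙 c) ≫ s x (E.tensor a b) c := by
  refine D.hom_ext4 ?_
  simp only [S.postT4_comp]
  rw [hs.postT4_θ4, ← β.b43_postT4, hs.postT4_tensorHom_θ4, ← β.b43_postT4,
    ← β.b42_postT4, postT4_α_θ4, β.comp_ter_3, postT4_tensorHom_α_θ4, S.postT4_tt32_2, hs]

lemma α_α_whiskerLeft (hs : D.IsInducedBraiding β s) (x a b c : C) :
    E.tensorHom (E.α x a b) (𝟙 c) ≫ E.α x (E.tensor a b) c ≫ E.tensorHom (𝟙 x) (s a b c)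
      = s (E.tensor x a) b c ≫ E.tensorHom (E.α x a c) (𝟙 b) ≫
          E.α x (E.tensor a c) b := by
  refine D.hom_ext4 ?_
  simp only [S.postT4_comp]
  rw [postT4_tensorHom_α_θ4, postT4_α_tt32_2, postT4_tensorHom_tt23_2, hs, β.comp_bin_2,
    hs.postT4_θ4, ← β.b43_postT4, postT4_tensorHom_α_θ4, ← β.b43_postT4, postT4_α_tt32_2]

lemma comp_eq_id (hs : D.IsInducedBraiding β s) (hβ : β.IsSymmetry) (x a b : C) :
    s x a b ≫ s x b a = 𝟙 (E.tensor (E.tensor x a) b) := by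
  refine D.hom_ext3 ?_
  rw [S.postT3_comp, hs, ← β.b3_postT3, hs, hβ, S.postT3_id]

end IsInducedBraiding

end KDataS

theorem stmt_16_general {C : Type u} [Category.{v} C] (S : ShortSkewMultiStruct C)
    (β : ShortBraiding S) (E : SkewMonStruct C) (D : KDataS S E)
    (s : ∀ x a b : C, E.tensor (E.tensor x a) b ⟶ E.tensor (E.tensor x b) a)
    (s_eq : ∀ x a b : C,
      S.mapT3 (𝟙 x) (𝟙 a) (𝟙 b) (s x a b)
          (S.tt22_1 (D.θ (E.tensor x a) b) (D.θ x a))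
        = β.b3 (S.tt22_1 (D.θ (E.tensor x b) a) (D.θ x b))) :
    -- `s` is a family of isomorphisms
    (∀ x a b : C, IsIso (s x a b)) ∧
    -- the four axioms of a braiding on a skew monoidal category
    (∀ x a b c : C,
      s (E.tensor x a) b c ≫ E.tensorHom (s x a c) (𝟙 b) ≫ s (E.tensor x c) a b
        = E.tensorHom (s x a b) (𝟙 c) ≫ s (E.tensor x b) a c ≫
            E.tensorHom (s x b c) (𝟙 a)) ∧
    (∀ x a b c : C,
      E.tensorHom (s x a b) (𝟙 c) ≫ s (E.tensor x b) a c ≫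
          E.tensorHom (E.α x b c) (𝟙 a)
        = E.α (E.tensor x a) b c ≫ s x a (E.tensor b c)) ∧
    (∀ x a b c : C,
      s (E.tensor x a) b c ≫ E.tensorHom (s x a c) (𝟙 b) ≫ E.α (E.tensor x c) a b
        = E.tensorHom (E.α x a b) (𝟙 c) ≫ s x (E.tensor a b) c) ∧
    (∀ x a b c : C,
      E.tensorHom (E.α x a b) (𝟙 c) ≫ E.α x (E.tensor a b) c ≫
          E.tensorHom (𝟙 x) (s a b c)
        = s (E.tensor x a) b c ≫ E.tensorHom (E.α x a c) (𝟙 b) ≫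
            E.α x (E.tensor a c) b) ∧
    -- if the short braiding is a symmetry, so is the induced braiding
    (β.IsSymmetry → ∀ x a b : C, s x a b ≫ s x b a = 𝟙 (E.tensor (E.tensor x a) b)) := by
  have hs : D.IsInducedBraiding β s := s_eq
  exact ⟨hs.isIso, hs.yangBaxter, hs.hexagon_right, hs.hexagon_left, hs.α_α_whiskerLeft,
    hs.comp_eq_id⟩

/-- **Statement 16** (Proposition 5.23 of Bourke–Lobbia, "A Skew Approach to
Representability"). Let `𝔠` be a left representable short skew multicategory
equipped with a short braiding `β`, and let `K^s𝔠` be the skew monoidal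
category built from a choice `(θ, u)` of left universal classifiers.  Then the
unique natural family of isomorphisms `s_{x,a,b} : (xa)b ⟶ (xb)a` determined
by `s ∘ (θ_{xa,b} ∘₁ θ_{x,a}) = β³₂(θ_{xb,a} ∘₁ θ_{x,b})` is a braiding on
`K^s𝔠`; moreover, if the short braiding is a short symmetry then this braiding
is a symmetry. -/
theorem stmt_16 {C : Type u} [Category.{v} C] (S : ShortSkewMultiStruct C)
    (β : ShortBraiding S) (E : SkewMonStruct C) (D : KDataS S E)
    (s : ∀ x a b : C, E.tensor (E.tensor x a) b ⟶ E.tensor (E.tensor x b) a)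
    (s_nat : ∀ {x x' a a' b b' : C} (f : x ⟶ x') (g : a ⟶ a') (h : b ⟶ b'),
      E.tensorHom (E.tensorHom f g) h ≫ s x' a' b'
        = s x a b ≫ E.tensorHom (E.tensorHom f h) g)
    (s_eq : ∀ x a b : C,
      S.mapT3 (𝟙 x) (𝟙 a) (𝟙 b) (s x a b)
          (S.tt22_1 (D.θ (E.tensor x a) b) (D.θ x a))
        = β.b3 (S.tt22_1 (D.θ (E.tensor x b) a) (D.θ x b))) :
    -- `s` is a family of isomorphisms
    (∀ x a b : C, IsIso (s x a b)) ∧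
    -- the four axioms of a braiding on a skew monoidal category
    (∀ x a b c : C,
      s (E.tensor x a) b c ≫ E.tensorHom (s x a c) (𝟙 b) ≫ s (E.tensor x c) a b
        = E.tensorHom (s x a b) (𝟙 c) ≫ s (E.tensor x b) a c ≫
            E.tensorHom (s x b c) (𝟙 a)) ∧
    (∀ x a b c : C,
      E.tensorHom (s x a b) (𝟙 c) ≫ s (E.tensor x b) a c ≫
          E.tensorHom (E.α x b c) (𝟙 a)
        = E.α (E.tensor x a) b c ≫ s x a (E.tensor b c)) ∧
    (∀ x a b c : C,
      s (E.tensor x a) b c ≫ E.tensorHom (s x a c) (𝟙 b) ≫ E.α (E.tensor x c) a b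
        = E.tensorHom (E.α x a b) (𝟙 c) ≫ s x (E.tensor a b) c) ∧
    (∀ x a b c : C,
      E.tensorHom (E.α x a b) (𝟙 c) ≫ E.α x (E.tensor a b) c ≫
          E.tensorHom (𝟙 x) (s a b c)
        = s (E.tensor x a) b c ≫ E.tensorHom (E.α x a c) (𝟙 b) ≫
            E.α x (E.tensor a c) b) ∧
    -- if the short braiding is a symmetry, so is the induced braiding
    (β.IsSymmetry → ∀ x a b : C, s x a b ≫ s x b a = 𝟙 (E.tensor (E.tensor x a) b)) :=
  stmt_16_general S β E D s s_eq
end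

section
/- Let 𝔠 be a braided left representable short skew multicategory, with induced braiding s on K^s𝔠 determined by s∘(θ_{xa,b}∘₁θ_{x,a}) = β³₂(θ_{xb,a}∘₁θ_{x,b}). Then: (i) for any tight ternary map f : a,b,c → d, β³₂(f) = f''∘s∘(θ_{ac,b}∘₁θ_{a,c}), where f'' : (ab)c → d is the unique tight unary map with f''∘(θ_{ab,c}∘₁θ_{a,b}) = f; (ii) for any tight 4-ary map g : a,b,c,d → e, β⁴₂(g) = g''∘₁β³₂(θ_{ab,c}∘₁θ_{a,b}), where g'' : (ab)c,d → e is the unique tight binary map with g''∘₁(θ_{ab,c}∘₁θ_{a,b}) = g, and β⁴₃(g) = β³₂(g')∘₁θ_{a,b}, where g' : ab,c,d → e is the unique tight ternary map with g'∘₁θ_{a,b} = g. -/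
open CategoryTheory

universe v u

theorem stmt_17_general {C : Type u} [Category.{v} C] (S : ShortSkewMultiStruct C)
    (β : ShortBraiding S)
    (T : C → C → C) (θ : ∀ a b : C, S.T2 a b (T a b))
    (s : ∀ x a b : C, T (T x a) b ⟶ T (T x b) a)
    (s_eq : ∀ x a b : C,
      S.mapT3 (𝟙 x) (𝟙 a) (𝟙 b) (s x a b) (S.tt22_1 (θ (T x a) b) (θ x a))
        = β.b3 (S.tt22_1 (θ (T x b) a) (θ x b))) :
    -- (i)
    (∀ (a b c d : C) (f : S.T3 a b c d) (f'' : T (T a b) c ⟶ d),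
      S.mapT3 (𝟙 a) (𝟙 b) (𝟙 c) f'' (S.tt22_1 (θ (T a b) c) (θ a b)) = f →
      β.b3 f = S.mapT3 (𝟙 a) (𝟙 c) (𝟙 b) (s a c b ≫ f'')
        (S.tt22_1 (θ (T a c) b) (θ a c))) ∧
    -- (ii), for `β⁴₂`
    (∀ (a b c d e : C) (g : S.T4 a b c d e) (g'' : S.T2 (T (T a b) c) d e),
      S.tt23_1 g'' (S.tt22_1 (θ (T a b) c) (θ a b)) = g →
      β.b42 g = S.tt23_1 g'' (β.b3 (S.tt22_1 (θ (T a b) c) (θ a b)))) ∧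
    -- (ii), for `β⁴₃`
    (∀ (a b c d e : C) (g : S.T4 a b c d e) (g' : S.T3 (T a b) c d e),
      S.tt32_1 g' (θ a b) = g →
      β.b43 g = S.tt32_1 (β.b3 g') (θ a b)) := by
  refine ⟨?_, ?_, ?_⟩
  · rintro a b c d f f'' rfl
    rw [β.b3_nat, ← s_eq a c b, S.mapT3_comp]
    simp only [Category.comp_id]
  · rintro a b c d e g g'' rfl
    exact (β.comp_bin_1 _ _).symm
  · rintro a b c d e g g' rfl
    exact β.comp_ter_1 _ _

/-- **Statement 17** (Proposition 5.25 of Bourke–Lobbia, "A Skew Approach to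
Representability"). Let `𝔠` be a braided left representable short skew
multicategory, with tight binary classifiers `θ_{a,b} : a,b → ab` and induced
braiding `s` on `K^s𝔠` determined by
`s ∘ (θ_{xa,b} ∘₁ θ_{x,a}) = β³₂(θ_{xb,a} ∘₁ θ_{x,b})`.  Then:
(i) for any tight ternary map `f : a,b,c → d`,
  `β³₂(f) = f'' ∘ s ∘ (θ_{ac,b} ∘₁ θ_{a,c})`, where `f'' : (ab)c ⟶ d` is the
  unique tight unary map with `f'' ∘ (θ_{ab,c} ∘₁ θ_{a,b}) = f`;
(ii) for any tight 4-ary map `g : a,b,c,d → e`,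
  `β⁴₂(g) = g'' ∘₁ β³₂(θ_{ab,c} ∘₁ θ_{a,b})`, where `g'' : (ab)c, d → e` is the
  unique tight binary map with `g'' ∘₁ (θ_{ab,c} ∘₁ θ_{a,b}) = g`, and
  `β⁴₃(g) = β³₂(g') ∘₁ θ_{a,b}`, where `g' : ab, c, d → e` is the unique tight
  ternary map with `g' ∘₁ θ_{a,b} = g`. -/
theorem stmt_17 {C : Type u} [Category.{v} C] (S : ShortSkewMultiStruct C)
    (β : ShortBraiding S)
    (T : C → C → C) (θ : ∀ a b : C, S.T2 a b (T a b))
    (hθ : ∀ a b : C, S.IsLeftUniversalBin (θ a b))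
    (i : C) (uu : S.L0 i) (hu : S.IsLeftUniversalNul uu)
    (s : ∀ x a b : C, T (T x a) b ⟶ T (T x b) a)
    (s_eq : ∀ x a b : C,
      S.mapT3 (𝟙 x) (𝟙 a) (𝟙 b) (s x a b) (S.tt22_1 (θ (T x a) b) (θ x a))
        = β.b3 (S.tt22_1 (θ (T x b) a) (θ x b))) :
    -- (i)
    (∀ (a b c d : C) (f : S.T3 a b c d) (f'' : T (T a b) c ⟶ d),
      S.mapT3 (𝟙 a) (𝟙 b) (𝟙 c) f'' (S.tt22_1 (θ (T a b) c) (θ a b)) = f →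
      β.b3 f = S.mapT3 (𝟙 a) (𝟙 c) (𝟙 b) (s a c b ≫ f'')
        (S.tt22_1 (θ (T a c) b) (θ a c))) ∧
    -- (ii), for `β⁴₂`
    (∀ (a b c d e : C) (g : S.T4 a b c d e) (g'' : S.T2 (T (T a b) c) d e),
      S.tt23_1 g'' (S.tt22_1 (θ (T a b) c) (θ a b)) = g →
      β.b42 g = S.tt23_1 g'' (β.b3 (S.tt22_1 (θ (T a b) c) (θ a b)))) ∧
    -- (ii), for `β⁴₃`
    (∀ (a b c d e : C) (g : S.T4 a b c d e) (g' : S.T3 (T a b) c d e),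
      S.tt32_1 g' (θ a b) = g →
      β.b43 g = S.tt32_1 (β.b3 g') (θ a b)) :=
  stmt_17_general S β T θ s s_eq
end
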